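/- arXiv:2206.15299 — 6 statements merged into one kernel-verified Lean document; each statement's English description precedes it below -/
import Mathlib

section
/- Let α be an order-reversing partial contraction on [n] with kernel classes A₁ < A₂ < ⋯ < A_p mapped to b_p > b_{p−1} > ⋯ > b₁ (so A_i maps to b_{p−i+1}). If b_{i+1} − b_i ≥ 2 for some index i, then the corresponding gap in the domain satisfies: there exists j with min A_{j+1} − max A_j ≥ 2. -/
/-- Partial transformations on the chain with `n` elements. -/
abbrev PT (n : ℕ) := Fin n → Option (Fin n)

/-- Left-to-right composition of partial transformations: `x(f*g) = g(f(x))`. -/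
instance PT.instMul (n : ℕ) : Mul (PT n) := ⟨fun f g x => (f x).bind g⟩

instance PT.instSemigroup (n : ℕ) : Semigroup (PT n) where
  mul_assoc f g h := funext fun x => by
    show ((f x).bind g).bind h = (f x).bind (fun y => (g y).bind h)
    cases f x <;> rfl

/-- Domain of a partial transformation. -/
def dom {n : ℕ} (f : PT n) : Set (Fin n) := {x | (f x).isSome}

/-- Image of a partial transformation. -/
def im {n : ℕ} (f : PT n) : Set (Fin n) := {y | ∃ x, f x = some y}

/-- `f` is a contraction: `|f x - f y| ≤ |x - y|` on its domain. -/
def IsContraction {n : ℕ} (f : PT n) : Prop :=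
  ∀ x y a b, f x = some a → f y = some b → Nat.dist a.val b.val ≤ Nat.dist x.val y.val

/-- `f` is order-preserving on its domain. -/
def IsOP {n : ℕ} (f : PT n) : Prop :=
  ∀ x y a b, f x = some a → f y = some b → x ≤ y → a ≤ b

/-- `f` is order-reversing on its domain. -/
def IsOR {n : ℕ} (f : PT n) : Prop :=
  ∀ x y a b, f x = some a → f y = some b → x ≤ y → b ≤ a

/-- for an order-reversing partial contraction, a gap of size ≥ 2 between two
(consecutive) image values `u < v` forces a gap of size ≥ 2 between the corresponding
consecutive kernel classes: with `x = max` of the preimage of `v` and `y = min` of the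
preimage of `u` (the preimage of `v` preceding that of `u` in the domain), one has
`y - x ≥ 2`, i.e. there exists `j` with `min A_{j+1} - max A_j ≥ 2`. -/
theorem stmt_2 {n : ℕ} (f : PT n) (hor : IsOR f) (hc : IsContraction f)
    (x y u v : Fin n)
    (hx : f x = some v) (hxmax : ∀ z, f z = some v → z ≤ x)
    (hy : f y = some u) (hymin : ∀ z, f z = some u → y ≤ z)
    (hgap : u.val + 2 ≤ v.val) :
    x.val + 2 ≤ y.val := by
  have hxy : x.val < y.val := by
    by_contra h
    push_neg at h
    have := hor y x u v hy hx (by exact Fin.le_def.mpr h)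
    omega
  have hd := hc x y v u hx hy
  simp [Nat.dist] at hd
  omega
end

section
/- For n ≥ 3 and 1 ≤ p ≤ n−2, every order-preserving partial contraction α on [n] with |im α| = p can be written as a composition α = β∘γ of two order-preserving partial contractions β, γ on [n], each with image of size p+1. -/
/-
Write `f = β * τ` with `β, τ ∈ OCP_n`, `|im β| = |im f| + 1` and `im τ` larger than `im f`; cutting
the image of `τ` down to `im f` and one new point then gives `γ`. Conjugating by the reversal
`x ↦ n - 1 - x`, we may assume `n - 1 ∉ im f`, unless both `0` and `n - 1` lie in `im f`; then `f` is
a partial identity and `β` adds a missing point to it.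

If `f` moves no point down, then `n - 1 ∉ dom f` and `β` sends `n - 1` one above the largest value of
`f`, `τ` being the identity off that value. Otherwise let `m` be the first point with `f m < m`: `β`
follows `f` left of some `x₀ < m`, sends `x₀` to `v = f m` and is `f + 1` right of `x₀`, while `τ`
collapses `v + 1` onto `v`. The drop at `m` is the slack that keeps `β` a contraction.
-/

namespace PT

open Function

variable {n : ℕ}

def IsOCP (f : PT n) : Prop := IsOP f ∧ IsContraction f

theorem mul_apply (f g : PT n) (x : Fin n) : (f * g) x = (f x).bind g := rfl

theorem isOCP_iff {f : PT n} :
    IsOCP f ↔ ∀ x y a b, f x = some a → f y = some b → x < y →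
      a ≤ b ∧ b.val + x.val ≤ a.val + y.val := by
  constructor
  · rintro ⟨hop, hc⟩ x y a b hx hy hxy
    have hab := hop x y a b hx hy hxy.le
    have hd := hc x y a b hx hy
    simp only [Nat.dist] at hd
    omega
  · intro h
    refine ⟨fun x y a b hx hy hxy => ?_, fun x y a b hx hy => ?_⟩
    · rcases hxy.lt_or_eq with hlt | rfl
      · exact (h x y a b hx hy hlt).1
      · exact (Option.some_injective _ (hx.symm.trans hy)).le
    · rcases lt_trichotomy x y with hlt | rfl | hlt
      · have := h x y a b hx hy hlt
        simp only [Nat.dist]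
        omega
      · obtain rfl := Option.some_injective _ (hx.symm.trans hy)
        simp
      · have := h y x b a hy hx hlt
        simp only [Nat.dist]
        omega

theorem IsOCP.of_extends {f g : PT n} (hf : IsOCP f)
    (hgf : ∀ x a, g x = some a → f x = some a) : IsOCP g :=
  ⟨fun x y a b hx hy => hf.1 x y a b (hgf x a hx) (hgf y b hy),
    fun x y a b hx hy => hf.2 x y a b (hgf x a hx) (hgf y b hy)⟩

theorem isOCP_of_forall_eq {f : PT n} (hf : ∀ x a, f x = some a → a = x) : IsOCP f :=
  isOCP_iff.2 fun x y a b hx hy hxy => by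
    obtain rfl := hf x a hx
    obtain rfl := hf y b hy
    exact ⟨hxy.le, by omega⟩

theorem im_update_of_eq_none {f : PT n} {c : Fin n} (hc : f c = none) (d : Fin n) :
    im (update f c (some d)) = insert d (im f) := by
  ext b
  constructor
  · rintro ⟨x, hx⟩
    rcases eq_or_ne x c with rfl | hxc
    · rw [update_self] at hx
      exact Or.inl (Option.some_injective _ hx).symm
    · rw [update_of_ne hxc] at hx
      exact Or.inr ⟨x, hx⟩
  · rintro (rfl | ⟨x, hx⟩)
    · exact ⟨c, update_self c _ f⟩
    · have hxc : x ≠ c := by rintro rfl; rw [hc] at hx; cases hx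
      exact ⟨x, by rwa [update_of_ne hxc]⟩

theorem le_ncard_im_add_one {τ : PT n} (d : Fin n) (h : ∀ y, y ≠ d → y ∈ im τ) :
    n ≤ (im τ).ncard + 1 := by
  have huniv : (Set.univ : Set (Fin n)) ⊆ insert d (im τ) := fun y _ => by
    by_cases hy : y = d
    · exact Or.inl hy
    · exact Or.inr (h y hy)
  calc n = (Set.univ : Set (Fin n)).ncard := by simp
    _ ≤ (insert d (im τ)).ncard := Set.ncard_le_ncard huniv
    _ ≤ (im τ).ncard + 1 := Set.ncard_insert_le d _

def HasRankSuccFactorization (f : PT n) : Prop :=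
  ∃ β γ : PT n, IsOCP β ∧ IsOCP γ ∧ (im β).ncard = (im f).ncard + 1 ∧
    (im γ).ncard = (im f).ncard + 1 ∧ f = β * γ

theorem HasRankSuccFactorization.of_mul {f β τ : PT n} (hβ : IsOCP β) (hτ : IsOCP τ)
    (hfβτ : f = β * τ) (hβim : (im β).ncard = (im f).ncard + 1)
    (hτim : (im f).ncard < (im τ).ncard) : HasRankSuccFactorization f := by
  classical
  subst hfβτ
  obtain ⟨z, hzτ, hzf⟩ := Set.exists_mem_notMem_of_ncard_lt_ncard hτim
  set γ : PT n := fun y => (τ y).filter (· ∈ insert z (im (β * τ)))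
  have hγ : ∀ y b, γ y = some b ↔ τ y = some b ∧ b ∈ insert z (im (β * τ)) := by
    simp [γ, Option.filter_eq_some_iff]
  have hγim : im γ = insert z (im (β * τ)) := by
    ext b
    constructor
    · rintro ⟨y, hy⟩
      exact ((hγ y b).1 hy).2
    · intro hb
      rcases hb with rfl | ⟨x, hx⟩
      · obtain ⟨y, hy⟩ := hzτ
        exact ⟨y, (hγ y _).2 ⟨hy, Or.inl rfl⟩⟩
      · obtain ⟨y, -, hy⟩ := Option.bind_eq_some_iff.1 hx
        exact ⟨y, (hγ y b).2 ⟨hy, Or.inr ⟨x, hx⟩⟩⟩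
  refine ⟨β, γ, hβ, hτ.of_extends fun y b hy => ((hγ y b).1 hy).1, hβim, ?_, ?_⟩
  · rw [hγim, Set.ncard_insert_of_notMem hzf]
  · funext x
    simp only [mul_apply]
    cases hx : β x with
    | none => rfl
    | some y =>
      show τ y = γ y
      cases hy : τ y with
      | none => simp [γ, hy]
      | some b =>
        exact ((hγ y b).2 ⟨hy, Or.inr ⟨x, by simp [mul_apply, hx, hy]⟩⟩).symm

theorem HasRankSuccFactorization.of_update {f : PT n} {c d : Fin n} (hc : f c = none)
    (hd : d ∉ im f) (hβ : IsOCP (update f c (some d))) (hn : (im f).ncard + 2 ≤ n) :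
    HasRankSuccFactorization f := by
  classical
  set τ : PT n := fun y => if y = d then none else some y
  have hτ : IsOCP τ := isOCP_of_forall_eq fun y b hy => by
    simp only [τ] at hy
    split_ifs at hy
    exact (Option.some_injective _ hy).symm
  have hfβτ : f = update f c (some d) * τ := by
    funext x
    rw [mul_apply]
    rcases eq_or_ne x c with rfl | hxc
    · simp [hc, τ]
    · rw [update_of_ne hxc]
      cases hx : f x with
      | none => rfl
      | some b =>
        have hbd : b ≠ d := fun h => hd ⟨x, h ▸ hx⟩
        simp [τ, hbd]
  refine .of_mul hβ hτ hfβτ ?_ ?_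
  · rw [im_update_of_eq_none hc, Set.ncard_insert_of_notMem hd]
  · have := le_ncard_im_add_one d (τ := τ) fun y hy => ⟨y, by simp [τ, hy]⟩
    omega

def collapse (v y : Fin n) : Fin n :=
  ⟨if y ≤ v then y.val else y.val - 1, by have := y.isLt; split <;> omega⟩

theorem collapse_of_le {v y : Fin n} (h : y ≤ v) : collapse v y = y :=
  Fin.ext (if_pos h)

theorem val_collapse_of_lt {v y : Fin n} (h : v < y) : (collapse v y).val = y.val - 1 :=
  if_neg (not_le.2 h)

theorem collapse_injOn (v : Fin n) : Set.InjOn (collapse v) {v}ᶜ := by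
  intro x hx y hy hxy
  have hxv : x.val ≠ v.val := Fin.val_ne_of_ne hx
  have hyv : y.val ≠ v.val := Fin.val_ne_of_ne hy
  have := congrArg Fin.val hxy
  simp only [collapse, Fin.le_def] at this
  ext
  split_ifs at this <;> omega

theorem isOCP_collapse (v : Fin n) : IsOCP (fun y => some (collapse v y)) :=
  isOCP_iff.2 fun x y a b hx hy hxy => by
    obtain rfl := Option.some_injective _ hx
    obtain rfl := Option.some_injective _ hy
    simp only [collapse, Fin.le_def]
    split_ifs <;> omega

theorem isOCP_update_collapse {v : Fin n} {o : Option (Fin n)} (ho : o = none ∨ o = some v) :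
    IsOCP (update (fun y => some (collapse v y)) v o) := by
  refine (isOCP_collapse v).of_extends fun y a hya => ?_
  rcases eq_or_ne y v with rfl | hyv
  · rw [update_self] at hya
    rcases ho with rfl | rfl
    · cases hya
    · rw [← hya, collapse_of_le le_rfl]
  · rwa [update_of_ne hyv] at hya

theorem mem_im_update_collapse (v : Fin n) (o : Option (Fin n)) {y : Fin n} (hy : y.val + 1 < n) :
    y ∈ im (update (fun y => some (collapse v y)) v o) := by
  rcases lt_or_ge y v with hyv | hvy
  · exact ⟨y, by rw [update_of_ne hyv.ne, collapse_of_le hyv.le]⟩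
  · refine ⟨⟨y.val + 1, hy⟩, ?_⟩
    have hlt : v < ⟨y.val + 1, hy⟩ := Fin.lt_def.2 (show v.val < y.val + 1 by omega)
    rw [update_of_ne hlt.ne', Option.some_inj]
    exact Fin.ext (by rw [val_collapse_of_lt hlt]; rfl)

theorem ncard_im_of_eq_mul_collapse {f β : PT n} {v w : Fin n} {o : Option (Fin n)}
    (ho : o = none ∨ o = some v) (hfβ : f = β * update (fun y => some (collapse v y)) v o)
    (hv : v ∈ im β) (hw : w ∈ im β) (hvw : w.val = v.val + 1) :
    (im β).ncard = (im f).ncard + 1 := by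
  have hwv : w ≠ v := fun h => by rw [h] at hvw; omega
  have himf : collapse v '' (im β \ {v}) = im f := by
    ext b
    constructor
    · rintro ⟨c, ⟨⟨x, hx⟩, hcv⟩, rfl⟩
      exact ⟨x, by rw [hfβ, mul_apply, hx, Option.bind_some, update_of_ne hcv]⟩
    · rintro ⟨x, hx⟩
      rw [hfβ, mul_apply] at hx
      obtain ⟨c, hc, hcb⟩ := Option.bind_eq_some_iff.1 hx
      rcases eq_or_ne c v with rfl | hcv
      · rw [update_self] at hcb
        rcases ho with rfl | rfl
        · cases hcb
        · obtain rfl := Option.some_injective _ hcb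
          refine ⟨w, ⟨hw, hwv⟩, Fin.ext ?_⟩
          rw [val_collapse_of_lt (Fin.lt_def.2 (by omega)), hvw, Nat.add_sub_cancel]
      · rw [update_of_ne hcv] at hcb
        exact ⟨c, ⟨⟨x, hc⟩, hcv⟩, Option.some_injective _ hcb⟩
  have hinj : Set.InjOn (collapse v) (im β \ {v}) :=
    (collapse_injOn v).mono fun c hc => hc.2
  rw [← himf, hinj.ncard_image, Set.ncard_sdiff_singleton_add_one hv]

def shiftUp (b : Fin n) : Option (Fin n) :=
  if h : b.val + 1 < n then some ⟨b.val + 1, h⟩ else none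

theorem shiftUp_eq_some {b c : Fin n} : shiftUp b = some c ↔ c.val = b.val + 1 := by
  unfold shiftUp
  split_ifs with h
  · rw [Option.some_inj, Fin.ext_iff, eq_comm]
  · simp only [false_iff]
    omega

def liftAbove (f : PT n) (x₀ v : Fin n) : PT n := fun x =>
  if x < x₀ then f x else if x = x₀ then some v else (f x).bind shiftUp

theorem liftAbove_eq_some {f : PT n} {x₀ v x c : Fin n} :
    liftAbove f x₀ v x = some c ↔ x < x₀ ∧ f x = some c ∨ x = x₀ ∧ c = v ∨
      x₀ < x ∧ ∃ b, f x = some b ∧ c.val = b.val + 1 := by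
  unfold liftAbove
  rcases lt_trichotomy x x₀ with hx | rfl | hx
  · simp [hx, hx.ne, hx.not_gt]
  · simp [eq_comm]
  · simp [hx, hx.ne', hx.not_gt, Option.bind_eq_some_iff, shiftUp_eq_some]

/-- The data that lets `f` factor through `liftAbove f x₀ v`, one rank higher, followed by
`collapse v`. -/
structure IsSplitPoint (f : PT n) (x₀ v : Fin n) : Prop where
  left : ∀ w b, f w = some b → w < x₀ → b < v ∧ v.val + w.val ≤ b.val + x₀.val
  right : ∀ w b, f w = some b → x₀ < w → v ≤ b ∧ b.val + x₀.val < v.val + w.val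
  self : f x₀ = none ∨ f x₀ = some v
  hit : ∃ y, x₀ < y ∧ f y = some v

namespace IsSplitPoint

variable {f : PT n} {x₀ v : Fin n}

theorem isOCP_liftAbove (hf : IsOCP f) (h : IsSplitPoint f x₀ v) :
    IsOCP (liftAbove f x₀ v) := by
  rw [isOCP_iff] at hf ⊢
  intro x y a b hx hy hxy
  rcases liftAbove_eq_some.1 hx with ⟨hx₀, hfx⟩ | ⟨rfl, rfl⟩ | ⟨hx₀, a', hfx, ha⟩ <;>
    rcases liftAbove_eq_some.1 hy with ⟨hy₀, hfy⟩ | ⟨rfl, rfl⟩ | ⟨hy₀, b', hfy, hb⟩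
  · exact hf x y a b hfx hfy hxy
  · have := h.left x a hfx hx₀
    omega
  · have := h.left x a hfx hx₀
    have := h.right y b' hfy hy₀
    omega
  · omega
  · omega
  · have := h.right y b' hfy hy₀
    omega
  · omega
  · omega
  · have := hf x y a' b' hfx hfy hxy
    omega

theorem eq_liftAbove_mul (h : IsSplitPoint f x₀ v)
    (htop : ∀ w b, f w = some b → b.val + 1 < n) :
    f = liftAbove f x₀ v * update (fun y => some (collapse v y)) v (f x₀) := by
  funext x
  rw [mul_apply]
  rcases lt_trichotomy x x₀ with hx | rfl | hx
  · simp only [liftAbove, if_pos hx]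
    cases hfx : f x with
    | none => rfl
    | some b =>
      have hbv := (h.left x b hfx hx).1
      rw [Option.bind_some, update_of_ne hbv.ne, collapse_of_le hbv.le]
  · simp [liftAbove]
  · simp only [liftAbove, if_neg (not_lt.2 hx.le), if_neg hx.ne']
    cases hfx : f x with
    | none => rfl
    | some b =>
      have hvb := (h.right x b hfx hx).1
      have hb := htop x b hfx
      have hlt : v < ⟨b.val + 1, hb⟩ := Fin.lt_def.2 (show v.val < b.val + 1 by omega)
      rw [Option.bind_some, shiftUp, dif_pos hb, Option.bind_some, update_of_ne hlt.ne',
        Option.some_inj]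
      exact Fin.ext (by rw [val_collapse_of_lt hlt]; rfl)

theorem hasRankSuccFactorization (hf : IsOCP f) (h : IsSplitPoint f x₀ v)
    (htop : ∀ w b, f w = some b → b.val + 1 < n) (hn : (im f).ncard + 2 ≤ n) :
    HasRankSuccFactorization f := by
  have hfβτ := h.eq_liftAbove_mul htop
  obtain ⟨y, hy, hfy⟩ := h.hit
  have hβim := ncard_im_of_eq_mul_collapse h.self hfβτ (w := ⟨v.val + 1, htop y v hfy⟩)
    ⟨x₀, liftAbove_eq_some.2 (.inr (.inl ⟨rfl, rfl⟩))⟩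
    ⟨y, liftAbove_eq_some.2 (.inr (.inr ⟨hy, v, hfy, rfl⟩))⟩ rfl
  refine .of_mul (h.isOCP_liftAbove hf) (isOCP_update_collapse h.self) hfβτ hβim ?_
  have := le_ncard_im_add_one (τ := update (fun y => some (collapse v y)) v (f x₀))
    ⟨n - 1, by omega⟩ fun y hy => mem_im_update_collapse v _ (by
      have : y.val ≠ n - 1 := fun h => hy (Fin.ext h)
      omega)
  omega

end IsSplitPoint

theorem IsOCP.exists_isSplitPoint {f : PT n} (hf : IsOCP f)
    (hdown : ∃ m a, f m = some a ∧ a < m) : ∃ x₀ v, IsSplitPoint f x₀ v := by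
  obtain ⟨m, hm⟩ := exists_minimal_of_wellFoundedLT (fun m => ∃ a, f m = some a ∧ a < m) hdown
  obtain ⟨v, hmv, hvm⟩ := hm.prop
  have hup : ∀ w b, f w = some b → w < m → w ≤ b := fun w b hw hwm =>
    not_lt.1 fun hbw => hm.not_lt ⟨b, hw, hbw⟩ hwm
  -- `x₀` is the first point of the fibre of `v = f m`, or `m - 1` if that comes first
  obtain ⟨x₀, hx₀⟩ := exists_minimal_of_wellFoundedLT
    (fun x : Fin n => x.val + 1 = m.val ∨ f x = some v)
    ⟨⟨m.val - 1, by omega⟩, .inl (show m.val - 1 + 1 = m.val by omega)⟩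
  have hx₀P := hx₀.prop
  have hx₀m : x₀ < m := by
    have := hx₀.not_lt (y := ⟨m.val - 1, by omega⟩) (.inl (show m.val - 1 + 1 = m.val by omega))
    simp only [Fin.lt_def, not_lt] at this
    omega
  rw [isOCP_iff] at hf
  refine ⟨x₀, v, ⟨fun w b hw hwx => ?_, fun w b hw hxw => ?_, ?_, m, hx₀m, hmv⟩⟩
  · have hbv := hf w m b v hw hmv (hwx.trans hx₀m)
    have hwb := hup w b hw (hwx.trans hx₀m)
    have hne : b ≠ v := fun hbv => hx₀.not_lt (.inr (hbv ▸ hw)) hwx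
    rcases hx₀P with hx₀m' | hfx₀
    · exact ⟨lt_of_le_of_ne hbv.1 hne, by omega⟩
    · exact ⟨lt_of_le_of_ne hbv.1 hne, (hf w x₀ b v hw hfx₀ hwx).2⟩
  · rcases lt_trichotomy w m with hwm | rfl | hmw
    · have hfx₀ : f x₀ = some v := hx₀P.resolve_left (by omega)
      have hvb := hf x₀ w v b hfx₀ hw hxw
      have hbv := hf w m b v hw hmv hwm
      exact ⟨hvb.1, by omega⟩
    · obtain rfl := Option.some_injective _ (hw.symm.trans hmv)
      exact ⟨le_rfl, by omega⟩
    · have := hf m w v b hmv hw hmw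
      exact ⟨this.1, by omega⟩
  · rcases hx₀P with hx₀m' | hfx₀
    · cases hfx : f x₀ with
      | none => exact .inl rfl
      | some b =>
        have := hup x₀ b hfx hx₀m
        have := hf x₀ m b v hfx hmv hx₀m
        exact .inr (congrArg some (by omega))
    · exact .inr hfx₀

theorem IsOCP.hasRankSuccFactorization_of_forall_le {f : PT n} (hf : IsOCP f)
    (hne : (im f).Nonempty) (hn : (im f).ncard + 2 ≤ n)
    (htop : ∀ w b, f w = some b → b.val + 1 < n) (hup : ∀ w b, f w = some b → w ≤ b) :
    HasRankSuccFactorization f := by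
  obtain ⟨m, hm⟩ := exists_maximal_of_wellFoundedGT (fun m => ∃ a, f m = some a)
    (let ⟨a, x, hx⟩ := hne; ⟨x, a, hx⟩)
  obtain ⟨a, hma⟩ := hm.prop
  have hmax : ∀ w b, f w = some b → w ≤ m := fun w b hw => not_lt.1 (hm.not_gt ⟨b, hw⟩)
  have ham := hup m a hma
  obtain ⟨last, hlast⟩ : ∃ l : Fin n, l.val = n - 1 := ⟨⟨n - 1, by omega⟩, rfl⟩
  obtain ⟨d, hd⟩ : ∃ d : Fin n, d.val = a.val + 1 := ⟨⟨a.val + 1, htop m a hma⟩, rfl⟩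
  have hfl : f last = none := by
    cases hfl : f last with
    | none => rfl
    | some b =>
      have := hup last b hfl
      have := htop last b hfl
      omega
  rw [isOCP_iff] at hf
  refine .of_update hfl (d := d) ?_ (isOCP_iff.2 ?_) hn
  · rintro ⟨w, hw⟩
    rcases (hmax w d hw).lt_or_eq with hwm | hwm
    · have := hf w m d a hw hma hwm
      omega
    · rw [hwm, hma, Option.some_inj] at hw
      omega
  · intro x y c e hx hy hxy
    rw [update_apply] at hx hy
    split_ifs at hx hy with hxl hyl hyl
    · omega
    · omega
    · cases hy
      rcases (hmax x c hx).lt_or_eq with hxm | rfl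
      · have := hf x m c a hx hma hxm
        omega
      · obtain rfl := Option.some_injective _ (hx.symm.trans hma)
        omega
    · exact hf x y c e hx hy hxy

theorem IsOCP.hasRankSuccFactorization_of_forall_lt_last {f : PT n} (hf : IsOCP f)
    (hne : (im f).Nonempty) (hn : (im f).ncard + 2 ≤ n)
    (htop : ∀ w b, f w = some b → b.val + 1 < n) : HasRankSuccFactorization f := by
  by_cases hdown : ∃ m a, f m = some a ∧ a < m
  · obtain ⟨x₀, v, h⟩ := hf.exists_isSplitPoint hdown
    exact h.hasRankSuccFactorization hf htop hn
  · push Not at hdown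
    exact hf.hasRankSuccFactorization_of_forall_le hne hn htop hdown

theorem IsOCP.eq_of_ends_mem_im {f : PT n} (hf : IsOCP f) {x₀ x₁ a₀ a₁ : Fin n}
    (h₀ : f x₀ = some a₀) (h₁ : f x₁ = some a₁) (ha₀ : a₀.val = 0) (ha₁ : a₁.val + 1 = n)
    {x a : Fin n} (hx : f x = some a) : a = x := by
  have h₀₁ := hf.2 x₀ x₁ a₀ a₁ h₀ h₁
  have h₀' := hf.2 x x₀ a a₀ hx h₀
  have h₁' := hf.2 x x₁ a a₁ hx h₁
  have hop : x₁ ≤ x₀ → a₁ ≤ a₀ := hf.1 x₁ x₀ a₁ a₀ h₁ h₀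
  simp only [Nat.dist] at h₀₁ h₀' h₁'
  omega

theorem hasRankSuccFactorization_of_forall_eq {f : PT n} (hid : ∀ x a, f x = some a → a = x)
    (hn : (im f).ncard + 2 ≤ n) : HasRankSuccFactorization f := by
  obtain ⟨c, hc⟩ : ∃ c, f c = none := by
    by_contra! hdom
    have : im f = Set.univ := Set.eq_univ_of_forall fun y => by
      obtain ⟨a, ha⟩ := Option.ne_none_iff_exists'.1 (hdom y)
      exact ⟨y, by rw [ha, hid y a ha]⟩
    rw [this, Set.ncard_univ, Nat.card_eq_fintype_card, Fintype.card_fin] at hn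
    omega
  refine .of_update hc (d := c) (fun ⟨x, hx⟩ => ?_) (isOCP_of_forall_eq fun x a hx => ?_) hn
  · obtain rfl := hid x c hx
    rw [hc] at hx
    cases hx
  · rw [update_apply] at hx
    split_ifs at hx with hxc
    · exact (Option.some_injective _ hx).symm.trans hxc.symm
    · exact hid x a hx

def revConj (f : PT n) : PT n := fun x => (f x.rev).map Fin.rev

theorem revConj_eq_some {f : PT n} {x b : Fin n} : revConj f x = some b ↔ f x.rev = some b.rev := by
  simp only [revConj, Option.map_eq_some_iff]
  constructor
  · rintro ⟨a, ha, rfl⟩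
    rwa [Fin.rev_rev]
  · exact fun h => ⟨b.rev, h, Fin.rev_rev b⟩

theorem revConj_revConj (f : PT n) : revConj (revConj f) = f := by
  funext x
  simp [revConj, Option.map_map, Function.comp_def]

theorem revConj_mul (f g : PT n) : revConj (f * g) = revConj f * revConj g := by
  funext x
  simp only [revConj, mul_apply]
  cases f x.rev <;> simp [revConj]

theorem IsOCP.revConj {f : PT n} (hf : IsOCP f) : IsOCP (revConj f) := by
  rw [isOCP_iff] at hf ⊢
  intro x y a b hx hy hxy
  have := hf y.rev x.rev b.rev a.rev (revConj_eq_some.1 hy) (revConj_eq_some.1 hx)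
    (Fin.rev_lt_rev.2 hxy)
  simp only [Fin.rev_le_rev, Fin.val_rev] at this
  omega

theorem im_revConj (f : PT n) : im (revConj f) = Fin.rev '' im f := by
  ext b
  simp only [im, revConj_eq_some, Set.mem_image, Set.mem_ofPred_eq]
  constructor
  · rintro ⟨x, hx⟩
    exact ⟨b.rev, ⟨x.rev, hx⟩, Fin.rev_rev b⟩
  · rintro ⟨a, ⟨x, hx⟩, rfl⟩
    exact ⟨x.rev, by rwa [Fin.rev_rev, Fin.rev_rev]⟩

theorem ncard_im_revConj (f : PT n) : (im (revConj f)).ncard = (im f).ncard := by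
  rw [im_revConj, Set.ncard_image_of_injective _ Fin.rev_injective]

theorem HasRankSuccFactorization.of_revConj {f : PT n}
    (h : HasRankSuccFactorization (revConj f)) : HasRankSuccFactorization f := by
  obtain ⟨β, γ, hβ, hγ, hβim, hγim, hfβγ⟩ := h
  refine ⟨revConj β, revConj γ, hβ.revConj, hγ.revConj, ?_, ?_, ?_⟩
  · rw [ncard_im_revConj, hβim, ncard_im_revConj]
  · rw [ncard_im_revConj, hγim, ncard_im_revConj]
  · rw [← revConj_mul, ← hfβγ, revConj_revConj]

end PT

open PT

theorem stmt_5_general {n p : ℕ} (hp1 : 1 ≤ p) (hp2 : p ≤ n - 2)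
    (f : PT n) (hop : IsOP f) (hc : IsContraction f) (him : (im f).ncard = p) :
    ∃ β γ : PT n, IsOP β ∧ IsContraction β ∧ IsOP γ ∧ IsContraction γ ∧
      (im β).ncard = p + 1 ∧ (im γ).ncard = p + 1 ∧ f = β * γ := by
  have hf : IsOCP f := ⟨hop, hc⟩
  have hn : (im f).ncard + 2 ≤ n := by omega
  have hne : (im f).Nonempty := Set.nonempty_of_ncard_ne_zero (by omega)
  suffices h : HasRankSuccFactorization f by
    obtain ⟨β, γ, hβ, hγ, hβim, hγim, hfβγ⟩ := h
    exact ⟨β, γ, hβ.1, hβ.2, hγ.1, hγ.2, him ▸ hβim, him ▸ hγim, hfβγ⟩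
  by_cases htop : ∀ w b, f w = some b → b.val + 1 < n
  · exact hf.hasRankSuccFactorization_of_forall_lt_last hne hn htop
  by_cases hbot : ∀ w b, f w = some b → b.val ≠ 0
  · refine .of_revConj (hf.revConj.hasRankSuccFactorization_of_forall_lt_last ?_ ?_ ?_)
    · rwa [im_revConj, Set.image_nonempty]
    · rwa [ncard_im_revConj]
    · intro w b hw
      have := hbot _ _ (revConj_eq_some.1 hw)
      rw [Fin.val_rev] at this
      omega
  push Not at htop hbot
  obtain ⟨x₁, a₁, h₁, ha₁⟩ := htop
  obtain ⟨x₀, a₀, h₀, ha₀⟩ := hbot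
  exact hasRankSuccFactorization_of_forall_eq
    (fun x a hx => hf.eq_of_ends_mem_im h₀ h₁ ha₀ (by omega) hx) hn

/-- for `n ≥ 3` and `1 ≤ p ≤ n-2`, every `α ∈ OCP_n` with `|im α| = p` factors as
`α = βγ` with `β, γ ∈ OCP_n` of image size `p+1`. -/
theorem stmt_5 {n p : ℕ} (hn : 3 ≤ n) (hp1 : 1 ≤ p) (hp2 : p ≤ n - 2)
    (f : PT n) (hop : IsOP f) (hc : IsContraction f) (him : (im f).ncard = p) :
    ∃ β γ : PT n, IsOP β ∧ IsContraction β ∧ IsOP γ ∧ IsContraction γ ∧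
      (im β).ncard = p + 1 ∧ (im γ).ncard = p + 1 ∧ f = β * γ :=
  stmt_5_general hp1 hp2 f hop hc him
end

section
/- For n ≥ 3, the ideal OCP_{n,n−1} = {α ∈ OCP_n : |im α| ≤ n−1} is generated (as a semigroup) by K_{n−1} = {α ∈ OCP_n : |im α| = n−1}. -/
section Stmt6

variable {n : ℕ}

def Kn (n : ℕ) : Set (PT n) :=
  {f : PT n | IsOP f ∧ IsContraction f ∧ (im f).ncard = n - 1}

lemma PT.mul_apply_s6 (f g : PT n) (x : Fin n) : (f * g) x = (f x).bind g := rfl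

lemma bind_eq_some' {o : Option (Fin n)} {g : PT n} {b : Fin n} (h : o.bind g = some b) :
    ∃ a, o = some a ∧ g a = some b := by
  cases o with
  | none => simp at h
  | some a => exact ⟨a, rfl, h⟩

lemma ncard_ne (a : Fin n) : {x : Fin n | x ≠ a}.ncard = n - 1 := by
  have h : {x : Fin n | x ≠ a} = Set.univ \ {a} := by ext x; simp
  rw [h, Set.ncard_diff_singleton_of_mem (Set.mem_univ a), Set.ncard_univ,
    Nat.card_eq_fintype_card, Fintype.card_fin]

def clampF (hn : 0 < n) (s : Fin n → ℕ) : Fin n → Fin n :=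
  fun x => ⟨min (s x) (n-1), lt_of_le_of_lt (min_le_right _ _) (by omega)⟩

def TotC (hn : 0 < n) (s : Fin n → ℕ) : PT n := fun x => some (clampF hn s x)

lemma clampF_val (hn : 0 < n) {s : Fin n → ℕ} (h : ∀ x, s x ≤ n-1) (x : Fin n) :
    (clampF hn s x).val = s x := min_eq_left (h x)

lemma totC_isOP (hn : 0 < n) {s : Fin n → ℕ} (bdd : ∀ x, s x ≤ n-1)
    (mono : ∀ x y : Fin n, x.val ≤ y.val → s x ≤ s y) : IsOP (TotC hn s) := by
  intro x y a b hx hy hxy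
  rw [TotC, Option.some_inj] at hx hy
  subst hx; subst hy
  rw [Fin.le_def, clampF_val hn bdd, clampF_val hn bdd]
  exact mono x y hxy

lemma totC_isContr (hn : 0 < n) {s : Fin n → ℕ} (bdd : ∀ x, s x ≤ n-1)
    (mono : ∀ x y : Fin n, x.val ≤ y.val → s x ≤ s y)
    (lip : ∀ x y : Fin n, x.val ≤ y.val → s y ≤ s x + (y.val - x.val)) :
    IsContraction (TotC hn s) := by
  intro x y a b hx hy
  rw [TotC, Option.some_inj] at hx hy
  subst hx; subst hy
  rw [clampF_val hn bdd, clampF_val hn bdd]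
  rcases le_total x.val y.val with h | h
  · have h1 := mono x y h; have h2 := lip x y h
    simp only [Nat.dist]; omega
  · have h1 := mono y x h; have h2 := lip y x h
    simp only [Nat.dist]; omega

lemma im_totC (hn : 0 < n) (s : Fin n → ℕ) : im (TotC hn s) = Set.range (clampF hn s) := by
  ext y
  constructor
  · rintro ⟨x, hx⟩; exact ⟨x, Option.some_inj.mp hx⟩
  · rintro ⟨x, hx⟩; exact ⟨x, by rw [TotC, hx]⟩

lemma ivt (hn : 0 < n) (s : Fin n → ℕ) (zF lastF : Fin n) (hz : zF.val = 0) (hl : lastF.val = n-1)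
    (lip : ∀ x y : Fin n, x.val ≤ y.val → s y ≤ s x + (y.val - x.val))
    {v : ℕ} (h0 : s zF ≤ v) (h1 : v ≤ s lastF) :
    ∃ x, s x = v := by
  classical
  have hTne : (Finset.univ.filter (fun x : Fin n => s x ≤ v)).Nonempty :=
    ⟨zF, by simp [h0]⟩
  set x0 := (Finset.univ.filter (fun x : Fin n => s x ≤ v)).max' hTne with hx0
  have hmem := (Finset.univ.filter (fun x : Fin n => s x ≤ v)).max'_mem hTne
  rw [← hx0] at hmem
  have hle : s x0 ≤ v := (Finset.mem_filter.mp hmem).2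
  rcases eq_or_lt_of_le hle with heq | hlt
  · exact ⟨x0, heq⟩
  · exfalso
    have hxlt : x0.val < n - 1 := by
      by_contra hcon
      have hx0val : x0.val = n - 1 := by have := x0.isLt; omega
      have : x0 = lastF := Fin.ext (by omega)
      rw [this] at hlt; omega
    have hx1lt : x0.val + 1 < n := by omega
    have hvv : (⟨x0.val + 1, hx1lt⟩ : Fin n).val = x0.val + 1 := rfl
    have hs1 : s ⟨x0.val + 1, hx1lt⟩ ≤ v := by
      have := lip x0 ⟨x0.val + 1, hx1lt⟩ (by omega)
      omega
    have hle' : (⟨x0.val + 1, hx1lt⟩ : Fin n) ≤ x0 :=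
      Finset.le_max' (Finset.univ.filter (fun x : Fin n => s x ≤ v))
        ⟨x0.val + 1, hx1lt⟩ (Finset.mem_filter.mpr ⟨Finset.mem_univ _, hs1⟩)
    have := Fin.le_def.mp hle'
    omega

lemma range_clampF (hn : 0 < n) (s : Fin n → ℕ) (zF lastF : Fin n) (hz : zF.val = 0) (hl : lastF.val = n-1)
    (bdd : ∀ x, s x ≤ n-1)
    (mono : ∀ x y : Fin n, x.val ≤ y.val → s x ≤ s y)
    (lip : ∀ x y : Fin n, x.val ≤ y.val → s y ≤ s x + (y.val - x.val)) :
    im (TotC hn s) = {y : Fin n | s zF ≤ y.val ∧ y.val ≤ s lastF} := by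
  rw [im_totC]
  ext y
  constructor
  · rintro ⟨x, rfl⟩
    have h1 := mono zF x (by omega)
    have h2 := mono x lastF (by have := x.isLt; omega)
    have hv : (clampF hn s x).val = s x := clampF_val hn bdd x
    exact ⟨by omega, by omega⟩
  · rintro ⟨hy1, hy2⟩
    obtain ⟨x, hx⟩ := ivt hn s zF lastF hz hl lip hy1 hy2
    exact ⟨x, Fin.ext (by rw [clampF_val hn bdd]; exact hx)⟩

lemma ncard_fin_interval (hn : 0 < n) {a b : ℕ} (ha : a ≤ n-1) (hb : b ≤ n-1) :
    {y : Fin n | a ≤ y.val ∧ y.val ≤ b}.ncard = b + 1 - a := by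
  have h : {y : Fin n | a ≤ y.val ∧ y.val ≤ b}
      = ↑(Finset.Icc (⟨a, by omega⟩ : Fin n) ⟨b, by omega⟩) := by
    ext y; simp [Finset.mem_Icc, Fin.le_def]
  rw [h, Set.ncard_coe_finset, Fin.card_Icc]

end Stmt6

lemma tmap_mem (hn : 3 ≤ n) {c : ℕ} (hc : c ≤ n - 2) :
    TotC (by omega) (fun y : Fin n => if y.val ≤ c then y.val else y.val - 1) ∈ Kn n := by
  have bdd : ∀ x : Fin n, (if x.val ≤ c then x.val else x.val - 1) ≤ n-1 := by
    intro x; have := x.isLt; split <;> omega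
  have mono : ∀ x y : Fin n, x.val ≤ y.val →
      (if x.val ≤ c then x.val else x.val - 1) ≤ (if y.val ≤ c then y.val else y.val - 1) := by
    intro x y h; split_ifs <;> omega
  have lip : ∀ x y : Fin n, x.val ≤ y.val →
      (if y.val ≤ c then y.val else y.val - 1) ≤ (if x.val ≤ c then x.val else x.val - 1) + (y.val - x.val) := by
    intro x y h; split_ifs <;> omega
  refine ⟨totC_isOP _ bdd mono, totC_isContr _ bdd mono lip, ?_⟩
  have him : im (TotC (by omega : 0 < n) (fun y : Fin n => if y.val ≤ c then y.val else y.val - 1))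
      = {y : Fin n | 0 ≤ y.val ∧ y.val ≤ n - 2} := by
    rw [im_totC]
    ext y
    constructor
    · rintro ⟨x, rfl⟩
      have hx := x.isLt
      have hv := clampF_val (by omega : 0 < n) bdd x
      refine ⟨by omega, ?_⟩
      show (clampF _ _ x).val ≤ n - 2
      rw [hv]; split <;> omega
    · rintro ⟨-, hy2⟩
      by_cases h : y.val ≤ c
      · refine ⟨y, Fin.ext ?_⟩
        rw [clampF_val (by omega : 0 < n) bdd]
        show (if y.val ≤ c then y.val else y.val - 1) = y.val
        rw [if_pos h]
      · refine ⟨⟨y.val + 1, by omega⟩, Fin.ext ?_⟩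
        rw [clampF_val (by omega : 0 < n) bdd]
        show (if y.val + 1 ≤ c then y.val + 1 else y.val + 1 - 1) = y.val
        rw [if_neg (by omega)]
        omega
  rw [him, ncard_fin_interval (by omega : 0 < n) (by omega) (by omega)]
  omega

lemma umap_mem (hn : 3 ≤ n) {c : ℕ} (hc1 : 1 ≤ c) (hc2 : c ≤ n - 1) :
    TotC (by omega) (fun y : Fin n => if y.val < c then y.val + 1 else y.val) ∈ Kn n := by
  have bdd : ∀ x : Fin n, (if x.val < c then x.val + 1 else x.val) ≤ n-1 := by
    intro x; have := x.isLt; split <;> omega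
  have mono : ∀ x y : Fin n, x.val ≤ y.val →
      (if x.val < c then x.val + 1 else x.val) ≤ (if y.val < c then y.val + 1 else y.val) := by
    intro x y h; split_ifs <;> omega
  have lip : ∀ x y : Fin n, x.val ≤ y.val →
      (if y.val < c then y.val + 1 else y.val) ≤ (if x.val < c then x.val + 1 else x.val) + (y.val - x.val) := by
    intro x y h; split_ifs <;> omega
  refine ⟨totC_isOP _ bdd mono, totC_isContr _ bdd mono lip, ?_⟩
  have him : im (TotC (by omega : 0 < n) (fun y : Fin n => if y.val < c then y.val + 1 else y.val))
      = {y : Fin n | 1 ≤ y.val ∧ y.val ≤ n - 1} := by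
    rw [im_totC]
    ext y
    constructor
    · rintro ⟨x, rfl⟩
      have hx := x.isLt
      have hv := clampF_val (by omega : 0 < n) bdd x
      refine ⟨?_, by omega⟩
      show 1 ≤ (clampF _ _ x).val
      rw [hv]; split <;> omega
    · rintro ⟨hy1, -⟩
      by_cases h : y.val ≤ c
      · refine ⟨⟨y.val - 1, by omega⟩, Fin.ext ?_⟩
        rw [clampF_val (by omega : 0 < n) bdd]
        show (if y.val - 1 < c then y.val - 1 + 1 else y.val - 1) = y.val
        rw [if_pos (by omega)]
        omega
      · refine ⟨y, Fin.ext ?_⟩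
        rw [clampF_val (by omega : 0 < n) bdd]
        show (if y.val < c then y.val + 1 else y.val) = y.val
        rw [if_neg (by omega)]
  rw [him, ncard_fin_interval (by omega : 0 < n) (by omega) (by omega)]
  omega

lemma tot_mem (hn : 3 ≤ n) (zF lastF : Fin n) (hz : zF.val = 0) (hl : lastF.val = n-1) :
    ∀ (k : ℕ) (s : Fin n → ℕ), (∀ x, s x ≤ n-1) →
      (∀ x y : Fin n, x.val ≤ y.val → s x ≤ s y) →
      (∀ x y : Fin n, x.val ≤ y.val → s y ≤ s x + (y.val - x.val)) →
      s lastF - s zF + k = n - 2 →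
      TotC (by omega : 0 < n) s ∈ Subsemigroup.closure (Kn n) := by
  intro k
  induction k with
  | zero =>
    intro s bdd mono lip hdiff
    apply Subsemigroup.subset_closure
    refine ⟨totC_isOP _ bdd mono, totC_isContr _ bdd mono lip, ?_⟩
    rw [range_clampF (by omega : 0 < n) s zF lastF hz hl bdd mono lip,
      ncard_fin_interval (by omega : 0 < n) (bdd zF) (bdd lastF)]
    have h0 : s zF ≤ s lastF := mono _ _ (by omega)
    omega
  | succ k ih =>
    intro s bdd mono lip hdiff
    classical
    have hzl : s zF ≤ s lastF := mono _ _ (by omega)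
    by_cases hcase : s lastF ≤ n - 2
    · -- Case A : split a fibre at the top
      have hAne : (Finset.univ.filter
          (fun x : Fin n => s x + (n - 1 - x.val) = s lastF)).Nonempty :=
        ⟨lastF, Finset.mem_filter.mpr ⟨Finset.mem_univ _, by omega⟩⟩
      set x0 := (Finset.univ.filter
          (fun x : Fin n => s x + (n - 1 - x.val) = s lastF)).min' hAne with hx0def
      have hx0A := (Finset.univ.filter
          (fun x : Fin n => s x + (n - 1 - x.val) = s lastF)).min'_mem hAne
      rw [← hx0def] at hx0A
      have hx0 : s x0 + (n - 1 - x0.val) = s lastF := (Finset.mem_filter.mp hx0A).2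
      have hx0lt := x0.isLt
      have hx0pos : 1 ≤ x0.val := by
        by_contra h
        have hx0z : x0 = zF := Fin.ext (by omega)
        rw [hx0z] at hx0
        omega
      have hplt : x0.val - 1 < n := by omega
      have hpval : ((⟨x0.val - 1, hplt⟩ : Fin n)).val = x0.val - 1 := rfl
      have hpne : s ⟨x0.val - 1, hplt⟩ + (n - 1 - (x0.val - 1)) ≠ s lastF := by
        intro h
        have hmem : (⟨x0.val - 1, hplt⟩ : Fin n) ∈ Finset.univ.filter
            (fun x : Fin n => s x + (n - 1 - x.val) = s lastF) :=
          Finset.mem_filter.mpr ⟨Finset.mem_univ _, by omega⟩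
        have hle := Finset.min'_le _ _ hmem
        rw [← hx0def] at hle
        have := Fin.le_def.mp hle
        omega
      have hplip := lip ⟨x0.val - 1, hplt⟩ lastF (by omega)
      have hpmono := mono ⟨x0.val - 1, hplt⟩ x0 (by omega)
      have hpc : s ⟨x0.val - 1, hplt⟩ = s x0 := by omega
      have hsx0last : s x0 ≤ s lastF := mono _ _ (by omega)
      have hub : ∀ y : Fin n, x0.val ≤ y.val → s y + (n - 1 - y.val) = s lastF := by
        intro y hy
        have hyl := y.isLt
        have h1 := lip y lastF (by omega)
        have h2 := lip x0 y hy
        omega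
      set g : Fin n → ℕ := fun x => if x0.val ≤ x.val then s x + 1 else s x with hg
      have hgval : ∀ x : Fin n, g x = if x0.val ≤ x.val then s x + 1 else s x := fun x => rfl
      have hgbdd : ∀ x, g x ≤ n - 1 := by
        intro x
        rw [hgval]
        have := mono x lastF (by have := x.isLt; omega)
        split <;> omega
      have hgmono : ∀ x y : Fin n, x.val ≤ y.val → g x ≤ g y := by
        intro x y h
        have := mono x y h
        rw [hgval, hgval]
        split_ifs <;> omega
      have hglip : ∀ x y : Fin n, x.val ≤ y.val → g y ≤ g x + (y.val - x.val) := by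
        intro x y h
        have hlxy := lip x y h
        rw [hgval, hgval]
        by_cases h1 : x0.val ≤ y.val
        · by_cases h2 : x0.val ≤ x.val
          · rw [if_pos h1, if_pos h2]; omega
          · rw [if_pos h1, if_neg h2]
            have hy := hub y h1
            have hx := lip x ⟨x0.val - 1, hplt⟩ (by omega)
            have hyl := y.isLt
            omega
        · rw [if_neg h1, if_neg (by omega : ¬ x0.val ≤ x.val)]
          omega
      have hglast : g lastF = s lastF + 1 := by
        rw [hgval, if_pos (by omega)]
      have hgz : g zF = s zF := by
        rw [hgval, if_neg (by omega)]
      have hgdiff : g lastF - g zF + k = n - 2 := by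
        rw [hglast, hgz]; omega
      have tbdd : ∀ y : Fin n, (if y.val ≤ s x0 then y.val else y.val - 1) ≤ n-1 := by
        intro y; have := y.isLt; split <;> omega
      have hcomp : TotC (by omega : 0 < n) s
          = TotC (by omega) g * TotC (by omega)
              (fun y : Fin n => if y.val ≤ s x0 then y.val else y.val - 1) := by
        funext x
        show some (clampF (by omega : 0 < n) s x)
            = some (clampF (by omega)
                (fun y : Fin n => if y.val ≤ s x0 then y.val else y.val - 1)
                (clampF (by omega) g x))
        congr 1
        apply Fin.ext
        rw [clampF_val (by omega : 0 < n) bdd, clampF_val (by omega : 0 < n) tbdd]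
        show s x = if (clampF (by omega : 0 < n) g x).val ≤ s x0
            then (clampF (by omega : 0 < n) g x).val
            else (clampF (by omega : 0 < n) g x).val - 1
        rw [clampF_val (by omega : 0 < n) hgbdd]
        by_cases hx : x0.val ≤ x.val
        · have hgx : g x = s x + 1 := by rw [hgval, if_pos hx]
          have hnot : ¬ (g x ≤ s x0) := by
            have := mono x0 x hx; omega
          rw [if_neg hnot, hgx]
          omega
        · have hgx : g x = s x := by rw [hgval, if_neg hx]
          have hyes : g x ≤ s x0 := by
            have := mono x ⟨x0.val - 1, hplt⟩ (by omega)
            omega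
          rw [if_pos hyes, hgx]
      rw [hcomp]
      exact Subsemigroup.mul_mem _ (ih g hgbdd hgmono hglip hgdiff)
        (Subsemigroup.subset_closure (tmap_mem hn (by omega)))
    · -- Case B : split a fibre at the bottom
      have hlastv : s lastF = n - 1 := by have := bdd lastF; omega
      have hszF : 2 ≤ s zF := by omega
      have hAne : (Finset.univ.filter
          (fun x : Fin n => s x = s zF + x.val)).Nonempty :=
        ⟨zF, Finset.mem_filter.mpr ⟨Finset.mem_univ _, by omega⟩⟩
      set x1 := (Finset.univ.filter
          (fun x : Fin n => s x = s zF + x.val)).max' hAne with hx1def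
      have hx1A := (Finset.univ.filter
          (fun x : Fin n => s x = s zF + x.val)).max'_mem hAne
      rw [← hx1def] at hx1A
      have hx1 : s x1 = s zF + x1.val := (Finset.mem_filter.mp hx1A).2
      have hx1lt : x1.val < n - 1 := by
        by_contra h
        have hb := bdd x1
        have := x1.isLt
        omega
      have hqlt : x1.val + 1 < n := by omega
      have hqval : ((⟨x1.val + 1, hqlt⟩ : Fin n)).val = x1.val + 1 := rfl
      have hqne : s ⟨x1.val + 1, hqlt⟩ ≠ s zF + (x1.val + 1) := by
        intro h
        have hmem : (⟨x1.val + 1, hqlt⟩ : Fin n) ∈ Finset.univ.filter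
            (fun x : Fin n => s x = s zF + x.val) :=
          Finset.mem_filter.mpr ⟨Finset.mem_univ _, by omega⟩
        have hle := Finset.le_max' _ _ hmem
        rw [← hx1def] at hle
        have := Fin.le_def.mp hle
        omega
      have hqlip := lip x1 ⟨x1.val + 1, hqlt⟩ (by omega)
      have hqmono := mono x1 ⟨x1.val + 1, hqlt⟩ (by omega)
      have hqc : s ⟨x1.val + 1, hqlt⟩ = s x1 := by omega
      have hlb : ∀ y : Fin n, y.val ≤ x1.val → s y = s zF + y.val := by
        intro y hy
        have h1 := lip zF y (by omega)
        have h2 := lip y x1 hy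
        omega
      set g : Fin n → ℕ := fun x => if x.val ≤ x1.val then s x - 1 else s x with hg
      have hgval : ∀ x : Fin n, g x = if x.val ≤ x1.val then s x - 1 else s x := fun x => rfl
      have hgbdd : ∀ x, g x ≤ n - 1 := by
        intro x
        rw [hgval]
        have := bdd x
        split <;> omega
      have hgmono : ∀ x y : Fin n, x.val ≤ y.val → g x ≤ g y := by
        intro x y h
        have h1 := mono x y h
        rw [hgval, hgval]
        split_ifs with ha hb hb
        · omega
        · omega
        · -- x ≤ x1 < y
          have h2 := mono x x1 (by omega)
          have h3 := mono ⟨x1.val + 1, hqlt⟩ y (by omega)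
          omega
        · omega
      have hglip : ∀ x y : Fin n, x.val ≤ y.val → g y ≤ g x + (y.val - x.val) := by
        intro x y h
        have hlxy := lip x y h
        rw [hgval, hgval]
        by_cases h1 : y.val ≤ x1.val
        · rw [if_pos h1, if_pos (by omega : x.val ≤ x1.val)]
          have hx' := hlb x (by omega)
          omega
        · by_cases h2 : x.val ≤ x1.val
          · rw [if_neg h1, if_pos h2]
            have hx' := hlb x h2
            have h3 := lip ⟨x1.val + 1, hqlt⟩ y (by omega)
            omega
          · rw [if_neg h1, if_neg h2]; omega
      have hglast : g lastF = s lastF := by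
        rw [hgval, if_neg (by omega)]
      have hgz : g zF = s zF - 1 := by
        rw [hgval, if_pos (by omega)]
      have hgdiff : g lastF - g zF + k = n - 2 := by
        rw [hglast, hgz]; omega
      have hc1 : 1 ≤ s x1 := by omega
      have hc2 : s x1 ≤ n - 1 := bdd x1
      have tbdd : ∀ y : Fin n, (if y.val < s x1 then y.val + 1 else y.val) ≤ n-1 := by
        intro y; have := y.isLt; split <;> omega
      have hcomp : TotC (by omega : 0 < n) s
          = TotC (by omega) g * TotC (by omega)
              (fun y : Fin n => if y.val < s x1 then y.val + 1 else y.val) := by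
        funext x
        show some (clampF (by omega : 0 < n) s x)
            = some (clampF (by omega)
                (fun y : Fin n => if y.val < s x1 then y.val + 1 else y.val)
                (clampF (by omega) g x))
        congr 1
        apply Fin.ext
        rw [clampF_val (by omega : 0 < n) bdd, clampF_val (by omega : 0 < n) tbdd]
        show s x = if (clampF (by omega : 0 < n) g x).val < s x1
            then (clampF (by omega : 0 < n) g x).val + 1
            else (clampF (by omega : 0 < n) g x).val
        rw [clampF_val (by omega : 0 < n) hgbdd]
        by_cases hx : x.val ≤ x1.val
        · have hgx : g x = s x - 1 := by rw [hgval, if_pos hx]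
          have hsx' := hlb x hx
          have hyes : g x < s x1 := by
            have := mono x x1 hx
            omega
          rw [if_pos hyes, hgx]
          omega
        · have hgx : g x = s x := by rw [hgval, if_neg hx]
          have hnot : ¬ (g x < s x1) := by
            have := mono ⟨x1.val + 1, hqlt⟩ x (by omega)
            omega
          rw [if_neg hnot, hgx]
      rw [hcomp]
      exact Subsemigroup.mul_mem _ (ih g hgbdd hgmono hglip hgdiff)
        (Subsemigroup.subset_closure (umap_mem hn hc1 hc2))

def epsF (s : Finset (Fin n)) : PT n := fun x => if x ∈ s then none else some x

lemma epsF_eq_some {s : Finset (Fin n)} {x u : Fin n} (h : epsF s x = some u) :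
    u = x ∧ x ∉ s := by
  by_cases hx : x ∈ s
  · simp [epsF, hx] at h
  · simp [epsF, hx] at h
    exact ⟨h.symm, hx⟩

lemma epsF_singleton_mem (hn : 3 ≤ n) (a : Fin n) : epsF {a} ∈ Kn n := by
  refine ⟨?_, ?_, ?_⟩
  · intro x y u v hx hy hxy
    obtain ⟨rfl, -⟩ := epsF_eq_some hx
    obtain ⟨rfl, -⟩ := epsF_eq_some hy
    exact hxy
  · intro x y u v hx hy
    obtain ⟨rfl, -⟩ := epsF_eq_some hx
    obtain ⟨rfl, -⟩ := epsF_eq_some hy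
    exact le_refl _
  · have him : im (epsF {a}) = {y : Fin n | y ≠ a} := by
      ext y
      constructor
      · rintro ⟨x, hx⟩
        obtain ⟨rfl, hxa⟩ := epsF_eq_some hx
        simpa using hxa
      · intro hy
        refine ⟨y, ?_⟩
        simp only [epsF, Finset.mem_singleton]
        rw [if_neg (by simpa using hy)]
    rw [him, ncard_ne]

lemma epsF_mem (hn : 3 ≤ n) : ∀ (s : Finset (Fin n)), s.Nonempty →
    epsF s ∈ Subsemigroup.closure (Kn n) := by
  intro s hs
  induction hs using Finset.Nonempty.cons_induction with
  | singleton a => exact Subsemigroup.subset_closure (epsF_singleton_mem hn a)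
  | cons a s ha hs ih =>
    have heq : epsF (Finset.cons a s ha) = epsF {a} * epsF s := by
      funext x
      rw [PT.mul_apply_s6]
      by_cases h1 : x = a
      · subst h1
        simp [epsF]
      · by_cases h2 : x ∈ s <;>
          simp [epsF, h1, h2, Finset.mem_cons]
    rw [heq]
    exact Subsemigroup.mul_mem _
      (Subsemigroup.subset_closure (epsF_singleton_mem hn a)) ih

def mcext (hn : 0 < n) (f : PT n) : Fin n → ℕ :=
  fun x => min (n-1) (Finset.univ.inf' ⟨⟨0, hn⟩, Finset.mem_univ _⟩
    (fun d : Fin n => (f d).elim (n-1) Fin.val + (x.val - d.val)))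

lemma mcext_bdd (hn : 0 < n) (f : PT n) : ∀ x, mcext hn f x ≤ n - 1 :=
  fun _ => min_le_left _ _

lemma mcext_le (hn : 0 < n) (f : PT n) (x d : Fin n) :
    mcext hn f x ≤ (f d).elim (n-1) Fin.val + (x.val - d.val) :=
  le_trans (min_le_right _ _) (Finset.inf'_le _ (Finset.mem_univ d))

lemma mcext_mono (hn : 0 < n) (f : PT n) :
    ∀ x y : Fin n, x.val ≤ y.val → mcext hn f x ≤ mcext hn f y := by
  intro x y h
  apply le_min (mcext_bdd hn f x)
  apply Finset.le_inf'
  intro d _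
  exact le_trans (mcext_le hn f x d) (by omega)

lemma mcext_lip (hn : 0 < n) (f : PT n) :
    ∀ x y : Fin n, x.val ≤ y.val → mcext hn f y ≤ mcext hn f x + (y.val - x.val) := by
  intro x y h
  obtain ⟨d, -, hd⟩ := Finset.exists_mem_eq_inf'
    (⟨⟨0, hn⟩, Finset.mem_univ _⟩ : (Finset.univ : Finset (Fin n)).Nonempty)
    (fun d : Fin n => (f d).elim (n-1) Fin.val + (x.val - d.val))
  have h1 : mcext hn f y ≤ (f d).elim (n-1) Fin.val + (y.val - d.val) := mcext_le hn f y d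
  have h2 : mcext hn f y ≤ n - 1 := mcext_bdd hn f y
  have h3 : mcext hn f x = min (n-1) ((f d).elim (n-1) Fin.val + (x.val - d.val)) := by
    rw [mcext, hd]
  omega

lemma mcext_ext (hn : 0 < n) {f : PT n} (hop : IsOP f) (hcontr : IsContraction f)
    {x : Fin n} {a : Fin n} (hxa : f x = some a) : mcext hn f x = a.val := by
  have h1 : mcext hn f x ≤ a.val := by
    have := mcext_le hn f x x
    rw [hxa] at this
    simpa using this
  have h2 : a.val ≤ mcext hn f x := by
    apply le_min (by have := a.isLt; omega)
    apply Finset.le_inf'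
    intro d _
    cases hfd : f d with
    | none => simp only [hfd, Option.elim]; have := a.isLt; omega
    | some b =>
      simp only [hfd, Option.elim]
      rcases le_total d.val x.val with hle | hle
      · have hOP := hop d x b a hfd hxa hle
        have hC := hcontr d x b a hfd hxa
        have hOP' : b.val ≤ a.val := hOP
        simp only [Nat.dist] at hC
        omega
      · have hOP := hop x d a b hxa hfd hle
        have hOP' : a.val ≤ b.val := hOP
        omega
  omega

def idealSG (n : ℕ) : Subsemigroup (PT n) where
  carrier := {f : PT n | IsOP f ∧ IsContraction f ∧ (im f).ncard ≤ n - 1}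
  mul_mem' := by
    rintro a b ⟨haop, hac, hai⟩ ⟨hbop, hbc, hbi⟩
    refine ⟨?_, ?_, ?_⟩
    · intro x y u v hx hy hxy
      rw [PT.mul_apply_s6] at hx hy
      obtain ⟨u', hu1, hu2⟩ := bind_eq_some' hx
      obtain ⟨v', hv1, hv2⟩ := bind_eq_some' hy
      exact hbop u' v' u v hu2 hv2 (haop x y u' v' hu1 hv1 hxy)
    · intro x y u v hx hy
      rw [PT.mul_apply_s6] at hx hy
      obtain ⟨u', hu1, hu2⟩ := bind_eq_some' hx
      obtain ⟨v', hv1, hv2⟩ := bind_eq_some' hy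
      exact le_trans (hbc u' v' u v hu2 hv2) (hac x y u' v' hu1 hv1)
    · refine le_trans (Set.ncard_le_ncard ?_ (Set.toFinite _)) hbi
      rintro y ⟨x, hx⟩
      rw [PT.mul_apply_s6] at hx
      obtain ⟨x', -, h2⟩ := bind_eq_some' hx
      exact ⟨x', h2⟩

lemma extension_exists (h01 : 0 < n) (f : PT n) (hop : IsOP f) (hcontr : IsContraction f) :
    ∃ s : Fin n → ℕ, (∀ x, s x ≤ n-1) ∧
      (∀ x y : Fin n, x.val ≤ y.val → s x ≤ s y) ∧
      (∀ x y : Fin n, x.val ≤ y.val → s y ≤ s x + (y.val - x.val)) ∧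
      (∀ x a, f x = some a → s x = a.val) :=
  ⟨mcext h01 f, mcext_bdd h01 f, mcext_mono h01 f, mcext_lip h01 f,
    fun _ _ h => mcext_ext h01 hop hcontr h⟩


set_option maxHeartbeats 1000000 in
/-- for `n ≥ 3`, the ideal `OCP_{n,n-1}` is generated by `K_{n-1}`. -/
theorem stmt_6 {n : ℕ} (hn : 3 ≤ n) :
    (Subsemigroup.closure {f : PT n | IsOP f ∧ IsContraction f ∧ (im f).ncard = n - 1} :
        Set (PT n)) =
      {f : PT n | IsOP f ∧ IsContraction f ∧ (im f).ncard ≤ n - 1} := by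
  classical
  apply Set.Subset.antisymm
  · -- closure ⊆ ideal
    intro f hf
    refine (Subsemigroup.closure_le (S := idealSG n)).mpr ?_ hf
    rintro g ⟨h1, h2, h3⟩
    exact ⟨h1, h2, le_of_eq h3⟩
  · -- ideal ⊆ closure
    rintro f ⟨hop, hcontr, hcard⟩
    have h01 : 0 < n := by omega
    set D : Finset (Fin n) := Finset.univ.filter (fun x => f x = none) with hD
    by_cases hid : ∀ x a, f x = some a → a = x
    · -- f is a restriction of the identity
      have hDne : D.Nonempty := by
        rw [Finset.nonempty_iff_ne_empty]
        intro hDe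
        have hall : ∀ x : Fin n, f x = some x := by
          intro x
          cases hfx : f x with
          | none =>
            exfalso
            have : x ∈ D := by simp [hD, hfx]
            rw [hDe] at this
            simp at this
          | some a => rw [hid x a hfx]
        have him : im f = Set.univ := by
          ext y
          simp only [Set.mem_univ, iff_true]
          exact ⟨y, hall y⟩
        rw [him, Set.ncard_univ, Nat.card_eq_fintype_card, Fintype.card_fin] at hcard
        omega
      have hfeq : f = epsF D := by
        funext x
        cases hfx : f x with
        | none =>
          rw [epsF]
          rw [if_pos (by simp [hD, hfx])]
        | some a =>
          have := hid x a hfx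
          subst this
          rw [epsF, if_neg (by simp [hD, hfx])]
      rw [hfeq]
      exact epsF_mem hn D hDne
    · push_neg at hid
      obtain ⟨x₀, a₀, hfx₀, hax₀⟩ := hid
      obtain ⟨s, bdd, mono, lip, hext⟩ := extension_exists h01 f hop hcontr
      set lastF : Fin n := ⟨n-1, by omega⟩ with hlastF
      set zF : Fin n := ⟨0, by omega⟩ with hzF
      have hlv : lastF.val = n - 1 := rfl
      have hzv : zF.val = 0 := rfl
      have hdle : s lastF - s zF ≤ n - 2 := by
        by_contra hcon
        have hb := bdd lastF
        have hid' : ∀ x : Fin n, s x = x.val := by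
          intro x
          have hxl := x.isLt
          have ha := lip zF x (by omega)
          have hb2 := lip x lastF (by omega)
          omega
        have h1 := hext x₀ a₀ hfx₀
        rw [hid' x₀] at h1
        exact hax₀ (Fin.ext h1.symm)
      have htot : TotC h01 s ∈ Subsemigroup.closure (Kn n) :=
        tot_mem hn zF lastF hzv hlv (n - 2 - (s lastF - s zF)) s bdd mono lip (by omega)
      by_cases hDne : D.Nonempty
      · have hfeq : f = epsF D * TotC h01 s := by
          funext x
          rw [PT.mul_apply_s6]
          cases hfx : f x with
          | none =>
            rw [epsF, if_pos (by simp [hD, hfx])]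
            rfl
          | some a =>
            rw [epsF, if_neg (by simp [hD, hfx])]
            show some a = some (clampF h01 s x)
            congr 1
            apply Fin.ext
            rw [clampF_val h01 bdd]
            exact (hext x a hfx).symm
        rw [hfeq]
        exact Subsemigroup.mul_mem _ (epsF_mem hn D hDne) htot
      · have hall : ∀ x : Fin n, f x ≠ none := by
          intro x hx
          exact hDne ⟨x, by simp [hD, hx]⟩
        have hfeq : f = TotC h01 s := by
          funext x
          cases hfx : f x with
          | none => exact absurd hfx (hall x)
          | some a =>
            show some a = some (clampF h01 s x)
            congr 1
            apply Fin.ext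
            rw [clampF_val h01 bdd]
            exact (hext x a hfx).symm
        rw [hfeq]
        exact htot
end

section
/- Let α be an element of OCP_n with |im α| = n−1 and |dom α| = n (n ≥ 3). Then the kernel partition of α has exactly one non-singleton class, which is a pair of adjacent points {i, i+1} for some 1 ≤ i ≤ n−1, and im α is either {1,…,n−1} or {2,…,n}. -/
/-- a total `α ∈ OCP_n` with `|im α| = n-1` has exactly one non-singleton kernel
class, a pair of adjacent points `{i, i+1}`, and its image is `{1,…,n-1}` or `{2,…,n}`
(0-indexed: `{y : y < n-1}` or `{y : y ≥ 1}`). -/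
theorem stmt_7 {n : ℕ} (hn : 3 ≤ n) (f : PT n) (hop : IsOP f) (hc : IsContraction f)
    (hdom : dom f = Set.univ) (him : (im f).ncard = n - 1) :
    (∃ i : ℕ, i + 1 < n ∧ ∀ x y : Fin n, x ≠ y →
        (f x = f y ↔ (x.val = i ∧ y.val = i + 1) ∨ (x.val = i + 1 ∧ y.val = i))) ∧
      (im f = {y : Fin n | y.val < n - 1} ∨ im f = {y : Fin n | 1 ≤ y.val}) := by
  have htot : ∀ x : Fin n, (f x).isSome := by
    intro x
    have : x ∈ dom f := by rw [hdom]; trivial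
    exact this
  obtain ⟨g, hfg⟩ : ∃ g : Fin n → Fin n, ∀ x, f x = some (g x) :=
    ⟨fun x => (f x).get (htot x), fun x => (Option.some_get (htot x)).symm⟩
  have hmono : ∀ x y : Fin n, x ≤ y → g x ≤ g y := fun x y h =>
    hop x y (g x) (g y) (hfg x) (hfg y) h
  have hdist : ∀ x y : Fin n,
      (g x).val - (g y).val + ((g y).val - (g x).val) ≤ x.val - y.val + (y.val - x.val) := by
    intro x y
    have := hc x y (g x) (g y) (hfg x) (hfg y)
    simpa [Nat.dist] using this
  have hz : (0 : ℕ) < n := by omega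
  have hw : n - 1 < n := by omega
  obtain ⟨a, ha⟩ : ∃ a, g ⟨0, hz⟩ = a := ⟨_, rfl⟩
  obtain ⟨b, hb⟩ : ∃ b, g ⟨n - 1, hw⟩ = b := ⟨_, rfl⟩
  have hbn : b.val < n := b.isLt
  -- im f as a finset image
  have him' : im f = ↑(Finset.image g Finset.univ) := by
    ext y
    simp only [im, Set.mem_setOf_eq, Finset.coe_image, Finset.coe_univ, Set.image_univ,
      Set.mem_range]
    constructor
    · rintro ⟨x, hx⟩
      refine ⟨x, ?_⟩
      rw [hfg x] at hx
      exact Option.some.inj hx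
    · rintro ⟨x, rfl⟩; exact ⟨x, hfg x⟩
  have hcard : (Finset.image g Finset.univ).card = n - 1 := by
    rw [him', Set.ncard_coe_finset] at him
    exact him
  have hsub : Finset.image g Finset.univ ⊆ Finset.Icc a b := by
    intro y hy
    obtain ⟨x, -, rfl⟩ := Finset.mem_image.mp hy
    rw [Finset.mem_Icc]
    constructor
    · exact ha ▸ hmono ⟨0, hz⟩ x (by show (0 : ℕ) ≤ x.val; omega)
    · exact hb ▸ hmono x ⟨n - 1, hw⟩ (by show x.val ≤ n - 1; have := x.isLt; omega)
  have hIcc : n - 1 ≤ b.val + 1 - a.val := by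
    have h1 := Finset.card_le_card hsub
    rw [hcard, Fin.card_Icc] at h1
    exact h1
  have hban : a.val + n - 2 ≤ b.val := by omega
  -- upper and lower bounds on g
  have hub : ∀ k : Fin n, (g k).val ≤ a.val + k.val := by
    intro k
    have h1 : (g ⟨0, hz⟩).val - (g k).val + ((g k).val - (g ⟨0, hz⟩).val)
        ≤ 0 - k.val + (k.val - 0) := hdist ⟨0, hz⟩ k
    have h2 : (g ⟨0, hz⟩).val ≤ (g k).val :=
      hmono ⟨0, hz⟩ k (by show (0 : ℕ) ≤ k.val; omega)
    rw [ha] at h1 h2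
    omega
  have hlb : ∀ k : Fin n, a.val + k.val ≤ (g k).val + 1 := by
    intro k
    have hk := k.isLt
    have h1 : (g k).val - (g ⟨n - 1, hw⟩).val + ((g ⟨n - 1, hw⟩).val - (g k).val)
        ≤ k.val - (n - 1) + ((n - 1) - k.val) := hdist k ⟨n - 1, hw⟩
    have h2 : (g k).val ≤ (g ⟨n - 1, hw⟩).val :=
      hmono k ⟨n - 1, hw⟩ (by show k.val ≤ n - 1; omega)
    rw [hb] at h1 h2
    omega
  -- g is not injective
  have hninj : ¬ Function.Injective g := by
    intro hinj
    rw [Finset.card_image_of_injective _ hinj, Finset.card_univ, Fintype.card_fin] at hcard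
    omega
  obtain ⟨p, q, hpq, hne⟩ := Function.not_injective_iff.mp hninj
  -- extract an adjacent collapsed pair
  obtain ⟨i, hi1, hstep⟩ :
      ∃ i, ∃ h1 : i + 1 < n, g ⟨i, Nat.lt_of_succ_lt h1⟩ = g ⟨i + 1, h1⟩ := by
    have key : ∀ p q : Fin n, p < q → g p = g q →
        ∃ i, ∃ h1 : i + 1 < n, g ⟨i, Nat.lt_of_succ_lt h1⟩ = g ⟨i + 1, h1⟩ := by
      intro p q hlt hpq
      have hq := q.isLt
      have hl : p.val < q.val := hlt
      have hi1 : p.val + 1 < n := by omega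
      refine ⟨p.val, hi1, le_antisymm ?_ ?_⟩
      · exact hmono _ _ (by show p.val ≤ p.val + 1; omega)
      · have e1 : g ⟨p.val + 1, hi1⟩ ≤ g q :=
          hmono _ _ (by show p.val + 1 ≤ q.val; omega)
        have e2 : g p = g ⟨p.val, Nat.lt_of_succ_lt hi1⟩ := rfl
        calc g ⟨p.val + 1, hi1⟩ ≤ g q := e1
          _ = g p := hpq.symm
          _ = _ := e2
    rcases lt_or_gt_of_ne hne with h | h
    · exact key p q h hpq
    · exact key q p h hpq.symm
  have hiv : i < n - 1 := by omega
  -- value at the collapsed pair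
  have hci : (g ⟨i, Nat.lt_of_succ_lt hi1⟩).val = a.val + i := by
    have h1 : (g ⟨i, Nat.lt_of_succ_lt hi1⟩).val ≤ a.val + i := hub _
    have h2 : a.val + (i + 1) ≤ (g ⟨i + 1, hi1⟩).val + 1 := hlb ⟨i + 1, hi1⟩
    rw [← hstep] at h2
    omega
  -- the value formula
  have hform : ∀ k : Fin n,
      (g k).val = if k.val ≤ i then a.val + k.val else a.val + k.val - 1 := by
    intro k
    split_ifs with hk
    · have h1 : (g k).val ≤ a.val + k.val := hub k
      have h2 : (g k).val - (g ⟨i, Nat.lt_of_succ_lt hi1⟩).val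
          + ((g ⟨i, Nat.lt_of_succ_lt hi1⟩).val - (g k).val)
          ≤ k.val - i + (i - k.val) := hdist k ⟨i, Nat.lt_of_succ_lt hi1⟩
      rw [hci] at h2
      omega
    · have h1 : a.val + k.val ≤ (g k).val + 1 := hlb k
      have h2 : (g ⟨i + 1, hi1⟩).val - (g k).val + ((g k).val - (g ⟨i + 1, hi1⟩).val)
          ≤ (i + 1) - k.val + (k.val - (i + 1)) := hdist ⟨i + 1, hi1⟩ k
      rw [← hstep, hci] at h2
      omega
  have hbval : b.val = a.val + n - 2 := by
    have h1 : (g ⟨n - 1, hw⟩).val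
        = if n - 1 ≤ i then a.val + (n - 1) else a.val + (n - 1) - 1 := hform _
    rw [hb, if_neg (by omega)] at h1
    omega
  have ha1 : a.val = 0 ∨ a.val = 1 := by omega
  constructor
  · refine ⟨i, hi1, ?_⟩
    intro x y hxy
    have hxv : x.val ≠ y.val := fun h => hxy (Fin.ext h)
    rw [hfg x, hfg y]
    constructor
    · intro h
      have hv : (g x).val = (g y).val := by rw [Option.some.inj h]
      rw [hform x, hform y] at hv
      have hx1 := x.isLt
      have hy1 := y.isLt
      split_ifs at hv <;> omega
    · rintro (⟨hx, hy⟩ | ⟨hx, hy⟩) <;>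
      · refine congrArg some (Fin.ext ?_)
        rw [hform x, hform y]
        split_ifs <;> omega
  · have himr : ∀ y : Fin n, y ∈ im f ↔ ∃ x, g x = y := by
      intro y
      constructor
      · rintro ⟨x, hx⟩
        refine ⟨x, ?_⟩
        rw [hfg x] at hx
        exact Option.some.inj hx
      · rintro ⟨x, rfl⟩; exact ⟨x, hfg x⟩
    rcases ha1 with hA | hA
    · left
      ext y
      rw [himr y]
      simp only [Set.mem_setOf_eq]
      constructor
      · rintro ⟨x, rfl⟩
        have h1 := hform x
        have h2 := x.isLt
        split_ifs at h1 <;> omega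
      · intro hy
        by_cases hyi : y.val ≤ i
        · refine ⟨⟨y.val, y.isLt⟩, Fin.ext ?_⟩
          have h1 : (g ⟨y.val, y.isLt⟩).val
              = if y.val ≤ i then a.val + y.val else a.val + y.val - 1 := hform _
          rw [if_pos hyi] at h1
          show (g ⟨y.val, y.isLt⟩).val = y.val
          omega
        · have hlt : y.val + 1 < n := by omega
          refine ⟨⟨y.val + 1, hlt⟩, Fin.ext ?_⟩
          have h1 : (g ⟨y.val + 1, hlt⟩).val
              = if y.val + 1 ≤ i then a.val + (y.val + 1) else a.val + (y.val + 1) - 1 :=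
            hform _
          rw [if_neg (by omega)] at h1
          show (g ⟨y.val + 1, hlt⟩).val = y.val
          omega
    · right
      ext y
      rw [himr y]
      simp only [Set.mem_setOf_eq]
      constructor
      · rintro ⟨x, rfl⟩
        have h1 := hform x
        have h2 := x.isLt
        split_ifs at h1 <;> omega
      · intro hy
        have hyn := y.isLt
        by_cases hyi : y.val - 1 ≤ i
        · have hlt : y.val - 1 < n := by omega
          refine ⟨⟨y.val - 1, hlt⟩, Fin.ext ?_⟩
          have h1 : (g ⟨y.val - 1, hlt⟩).val
              = if y.val - 1 ≤ i then a.val + (y.val - 1) else a.val + (y.val - 1) - 1 :=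
            hform _
          rw [if_pos hyi] at h1
          show (g ⟨y.val - 1, hlt⟩).val = y.val
          omega
        · refine ⟨⟨y.val, y.isLt⟩, Fin.ext ?_⟩
          have h1 : (g ⟨y.val, y.isLt⟩).val
              = if y.val ≤ i then a.val + y.val else a.val + y.val - 1 := hform _
          rw [if_neg (by omega)] at h1
          show (g ⟨y.val, y.isLt⟩).val = y.val
          omega
end

section
/- Let α ∈ OCP_n with |im α| = n−1 and |dom α| = n−1 (so α is injective), say dom α = [n]∖{j} for some 2 ≤ j ≤ n−1. Then im α is one of {1,…,n−1}, {2,…,n}, or [n]∖{j}, that is, im α = [n]∖{t} with t ∈ {1, j, n}. -/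
/-- Discrete intermediate value theorem: if `g` increases by at most 1 at each step,
then every value between `g l` and `g r` is attained on `[l, r]`. -/
lemma nat_ivt (g : ℕ → ℕ) (l : ℕ) :
    ∀ r, l ≤ r → (∀ k, l ≤ k → k < r → g (k+1) ≤ g k + 1) →
    ∀ v, g l ≤ v → v ≤ g r → ∃ k, l ≤ k ∧ k ≤ r ∧ g k = v := by
  intro r
  induction r with
  | zero =>
    intro h _ v hv1 hv2
    have hl : l = 0 := Nat.le_zero.mp h
    subst hl
    exact ⟨0, le_refl _, le_refl _, by omega⟩
  | succ r ih =>
    intro hlr hstep v hv1 hv2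
    by_cases hlr' : l ≤ r
    · by_cases h : v ≤ g r
      · obtain ⟨k, h1, h2, h3⟩ := ih hlr' (fun k a b => hstep k a (by omega)) v hv1 h
        exact ⟨k, h1, by omega, h3⟩
      · have := hstep r hlr' (by omega)
        exact ⟨r+1, by omega, le_refl _, by omega⟩
    · have hl : l = r + 1 := by omega
      subst hl
      exact ⟨r+1, le_refl _, le_refl _, by omega⟩

/-- an injective `α ∈ OCP_n` with domain `[n]\{j}` (`j` interior) and image of
size `n-1` has image `[n]\{t}` for some `t ∈ {1, j, n}` (0-indexed `{0, j, n-1}`). -/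
theorem stmt_8 {n : ℕ} (hn : 3 ≤ n) (f : PT n) (hop : IsOP f) (hc : IsContraction f)
    (j : ℕ) (hj1 : 1 ≤ j) (hj2 : j ≤ n - 2)
    (hdom : dom f = {x : Fin n | x.val ≠ j}) (him : (im f).ncard = n - 1) :
    ∃ t : Fin n, im f = {y : Fin n | y ≠ t} ∧
      (t.val = 0 ∨ t.val = j ∨ t.val = n - 1) := by
  -- f is defined at every point ≠ j
  have hval : ∀ k (hk : k < n), k ≠ j → ∃ y : Fin n, f ⟨k, hk⟩ = some y := by
    intro k hk hkj
    have hmem : (⟨k, hk⟩ : Fin n) ∈ dom f := by rw [hdom]; exact hkj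
    exact Option.isSome_iff_exists.mp hmem
  -- total value function
  set g : ℕ → ℕ := fun k => if h : k < n then (f ⟨k, h⟩).elim 0 Fin.val else 0 with hg
  have hgval : ∀ k (hk : k < n) (y : Fin n), f ⟨k, hk⟩ = some y → g k = y.val := by
    intro k hk y hy
    simp only [hg, dif_pos hk, hy, Option.elim]
  -- key indices
  have h0n : (0 : ℕ) < n := by omega
  have hj1n : j - 1 < n := by omega
  have hj2n : j + 1 < n := by omega
  have hn1n : n - 1 < n := by omega
  obtain ⟨y0, hy0⟩ := hval 0 h0n (by omega)
  obtain ⟨ya, hya⟩ := hval (j-1) hj1n (by omega)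
  obtain ⟨yb, hyb⟩ := hval (j+1) hj2n (by omega)
  obtain ⟨yc, hyc⟩ := hval (n-1) hn1n (by omega)
  set a0 := y0.val
  set a1 := ya.val
  set b0 := yb.val
  set b1 := yc.val
  -- order facts
  have ha0a1 : a0 ≤ a1 := hop _ _ _ _ hy0 hya (by simp [Fin.le_def])
  have ha1b0 : a1 ≤ b0 := hop _ _ _ _ hya hyb (by simp [Fin.le_def]; omega)
  have hb0b1 : b0 ≤ b1 := hop _ _ _ _ hyb hyc (by simp [Fin.le_def]; omega)
  -- contraction facts
  have hca : a1 ≤ a0 + (j - 1) := by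
    have := hc _ _ _ _ hya hy0
    simp only [Nat.dist] at this; omega
  have hcb : b1 ≤ b0 + (n - 2 - j) := by
    have := hc _ _ _ _ hyc hyb
    simp only [Nat.dist] at this; omega
  have hcg : b0 ≤ a1 + 2 := by
    have := hc _ _ _ _ hyb hya
    simp only [Nat.dist] at this; omega
  -- every value attained on a block is in the image
  have block : ∀ l r, l ≤ r → r < n → (∀ k, l ≤ k → k ≤ r → k ≠ j) →
      ∀ v, g l ≤ v → v ≤ g r → ∃ y ∈ im f, y.val = v := by
    intro l r hlr hrn hblk v hv1 hv2
    have hstep : ∀ k, l ≤ k → k < r → g (k+1) ≤ g k + 1 := by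
      intro k hk hkr
      have hk1n : k + 1 < n := by omega
      have hkn : k < n := by omega
      obtain ⟨y, hy⟩ := hval k hkn (hblk k hk (by omega))
      obtain ⟨y', hy'⟩ := hval (k+1) hk1n (hblk (k+1) (by omega) (by omega))
      have hd := hc _ _ _ _ hy' hy
      have hle := hop _ _ _ _ hy hy' (by simp [Fin.le_def])
      rw [hgval k hkn y hy, hgval (k+1) hk1n y' hy']
      simp only [Nat.dist] at hd
      simp only [Fin.le_def] at hle
      omega
    obtain ⟨k, hk1, hk2, hk3⟩ := nat_ivt g l r hlr hstep v hv1 hv2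
    have hkn : k < n := by omega
    obtain ⟨y, hy⟩ := hval k hkn (hblk k hk1 hk2)
    exact ⟨y, ⟨⟨k, hkn⟩, hy⟩, by rw [← hgval k hkn y hy, hk3]⟩
  have hg0 : g 0 = a0 := hgval 0 h0n y0 hy0
  have hga : g (j-1) = a1 := hgval (j-1) hj1n ya hya
  have hgb : g (j+1) = b0 := hgval (j+1) hj2n yb hyb
  have hgc : g (n-1) = b1 := hgval (n-1) hn1n yc hyc
  have block1 : ∀ v, a0 ≤ v → v ≤ a1 → ∃ y ∈ im f, y.val = v := by
    intro v h1 h2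
    exact block 0 (j-1) (by omega) hj1n (fun k hk hk' => by omega) v
      (by rw [hg0]; exact h1) (by rw [hga]; exact h2)
  have block2 : ∀ v, b0 ≤ v → v ≤ b1 → ∃ y ∈ im f, y.val = v := by
    intro v h1 h2
    exact block (j+1) (n-1) (by omega) hn1n (fun k hk hk' => by omega) v
      (by rw [hgb]; exact h1) (by rw [hgc]; exact h2)
  -- every image value lies in one of the two intervals
  have hcover : ∀ y ∈ im f, (a0 ≤ y.val ∧ y.val ≤ a1) ∨ (b0 ≤ y.val ∧ y.val ≤ b1) := by
    rintro y ⟨x, hx⟩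
    have hxj : x.val ≠ j := by
      have : x ∈ dom f := Option.isSome_iff_exists.mpr ⟨y, hx⟩
      rw [hdom] at this; exact this
    rcases Nat.lt_or_ge x.val j with hlt | hge
    · left
      constructor
      · exact hop _ _ _ _ hy0 hx (by simp [Fin.le_def])
      · exact hop _ _ _ _ hx hya (by simp [Fin.le_def]; omega)
    · right
      have hgt : j + 1 ≤ x.val := by omega
      constructor
      · exact hop _ _ _ _ hyb hx (by simp [Fin.le_def]; omega)
      · exact hop _ _ _ _ hx hyc (by simp [Fin.le_def]; have := x.isLt; omega)
  -- the complement of the image is a singleton {t}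
  have hcompl : (im f)ᶜ.ncard = 1 := by
    have h1 := Set.ncard_add_ncard_compl (im f)
    simp only [Nat.card_eq_fintype_card, Fintype.card_fin] at h1
    omega
  obtain ⟨t, ht⟩ := Set.ncard_eq_one.mp hcompl
  have himt : im f = {y : Fin n | y ≠ t} := by
    ext y
    constructor
    · intro hy hyt
      have : y ∈ (im f)ᶜ := ht ▸ hyt ▸ rfl
      exact this hy
    · intro hy
      by_contra h
      have : y ∈ (im f)ᶜ := h
      rw [ht] at this
      exact hy this
  refine ⟨t, himt, ?_⟩
  -- t is not covered by the two intervals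
  have htn : ¬ ((a0 ≤ t.val ∧ t.val ≤ a1) ∨ (b0 ≤ t.val ∧ t.val ≤ b1)) := by
    rintro (⟨h1, h2⟩ | ⟨h1, h2⟩)
    · obtain ⟨y, hy, hyv⟩ := block1 t.val h1 h2
      have : y = t := Fin.ext hyv
      subst this
      rw [himt] at hy
      exact hy rfl
    · obtain ⟨y, hy, hyv⟩ := block2 t.val h1 h2
      have : y = t := Fin.ext hyv
      subst this
      rw [himt] at hy
      exact hy rfl
  -- if t is interior, pin down the interval endpoints
  by_cases ht0 : t.val = 0
  · left; exact ht0
  by_cases htn1 : t.val = n - 1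
  · right; right; exact htn1
  right; left
  have ht1 : 1 ≤ t.val := by omega
  have ht2 : t.val ≤ n - 2 := by have := t.isLt; omega
  -- 0 is in the image
  have h0im : (⟨0, h0n⟩ : Fin n) ∈ im f := by
    rw [himt]
    intro h
    have : t.val = 0 := by rw [← h]
    exact ht0 this
  have ha00 : a0 = 0 := by
    rcases hcover _ h0im with ⟨h1, _⟩ | ⟨h1, _⟩ <;> simp at h1 <;> omega
  -- n-1 is in the image
  have hnim : (⟨n-1, hn1n⟩ : Fin n) ∈ im f := by
    rw [himt]
    intro h
    have : t.val = n - 1 := by rw [← h]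
    exact htn1 this
  have hb1n : b1 = n - 1 := by
    have hb1lt : b1 < n := yc.isLt
    rcases hcover _ hnim with ⟨_, h2⟩ | ⟨_, h2⟩ <;> simp at h2 <;> omega
  omega
end

section
/- For n ≥ 3 and 1 ≤ p ≤ n−2, every order-preserving-or-order-reversing partial contraction α on [n] with |im α| = p can be written as a composition of two elements of ORCP_n each having image of size p+1. -/
/-!
Reversing the order of `{0, …, n - 1}` on the left, or on both sides, preserves the class and the
rank, so it suffices to factor an order-preserving `α` that does not take the value `n - 1` (an `α`
taking both values `0` and `n - 1` is a partial identity and is covered by the first case below).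
* If `α` extends by one point `x ↦ e` within the class, with a new value `e`, follow that extension
  by a partial identity of rank `p + 1` that is undefined at `e`.
* If `α x₀ = α x₁ = a` with `x₀ < x₁`, lift the values to the right of `x₀` by one, then collapse
  `a + 1` back onto `a`.
* Otherwise `α` is injective and, for a free point `c`, every pair of points across `c` has slack
  (a tight pair would give an extension at `c`). Close the gap at `c` in the first factor and reopen
  it in the second, which also sends its spare point `n - 1` to `max α + 1`.
-/

namespace NatPT

variable {n p : ℕ} {f : ℕ → Option ℕ}

def dom (f : ℕ → Option ℕ) : Set ℕ := {x | ∃ y, f x = some y}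

def range (f : ℕ → Option ℕ) : Set ℕ := {y | ∃ x, f x = some y}

/-- Order-preserving partial contractions of `{0, …, n - 1}`, encoded as partial maps of `ℕ` so
that values can be shifted without bound proofs. With truncated subtraction, `b - a ≤ y - x` for
all pairs of the graph says at once that the map is order-preserving (take `y ≤ x`) and a
contraction. -/
structure IsOCP (n : ℕ) (f : ℕ → Option ℕ) : Prop where
  lt : ∀ {x y}, f x = some y → x < n ∧ y < n
  sub_le : ∀ {x y a b}, f x = some a → f y = some b → b - a ≤ y - x

def IsProductOfRank (n r : ℕ) (f : ℕ → Option ℕ) : Prop :=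
  ∃ β γ, IsOCP n β ∧ IsOCP n γ ∧ (range β).ncard = r ∧ (range γ).ncard = r ∧
    ∀ x, (β x).bind γ = f x

namespace IsOCP

variable (hf : IsOCP n f)
include hf

lemma le_of_le {x y a b : ℕ} (hx : f x = some a) (hy : f y = some b) (hxy : x ≤ y) : a ≤ b := by
  have := hf.sub_le hy hx
  omega

lemma range_subset : range f ⊆ Set.Iio n := fun _ ⟨_, hx⟩ => (hf.lt hx).2

lemma dom_subset : dom f ⊆ Set.Iio n := fun _ ⟨_, hx⟩ => (hf.lt hx).1

lemma range_finite : (range f).Finite := (Set.finite_Iio n).subset hf.range_subset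

lemma dom_finite : (dom f).Finite := (Set.finite_Iio n).subset hf.dom_subset

end IsOCP

lemma exists_lt_notMem {s : Set ℕ} (hs : s ⊆ Set.Iio n) (hcard : s.ncard < n) :
    ∃ z < n, z ∉ s :=
  Set.exists_mem_notMem_of_ncard_lt_ncard (t := Set.Iio n) (by rwa [Set.ncard_Iio_nat])
    ((Set.finite_Iio n).subset hs)

lemma ncard_dom_of_injective
    (hinj : ∀ x y v, f x = some v → f y = some v → x = y) :
    (dom f).ncard = (range f).ncard := by
  have himage : (fun x => (f x).getD 0) '' dom f = range f := by
    ext v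
    constructor
    · rintro ⟨x, ⟨u, hu⟩, rfl⟩
      exact ⟨x, by simp [hu]⟩
    · rintro ⟨x, hx⟩
      exact ⟨x, ⟨v, hx⟩, by simp [hx]⟩
  rw [← himage, Set.InjOn.ncard_image]
  rintro x ⟨u, hu⟩ y ⟨v, hv⟩ hxy
  simp only [hu, hv, Option.getD_some] at hxy
  exact hinj x y u hu (hxy ▸ hv)

open Classical in
noncomputable def restrict (g : ℕ → ℕ) (s : Set ℕ) : ℕ → Option ℕ :=
  fun x => if x ∈ s then some (g x) else none

lemma restrict_eq_some {g : ℕ → ℕ} {s : Set ℕ} {x y : ℕ} :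
    restrict g s x = some y ↔ x ∈ s ∧ g x = y := by
  simp [restrict]

lemma range_restrict (g : ℕ → ℕ) (s : Set ℕ) : range (restrict g s) = g '' s := by
  ext y
  simp [range, restrict_eq_some]

lemma isOCP_restrict {g : ℕ → ℕ} {s : Set ℕ} (hs : s ⊆ Set.Iio n) (hg : Set.MapsTo g s (Set.Iio n))
    (hlip : ∀ x y, g y - g x ≤ y - x) : IsOCP n (restrict g s) where
  lt h := by
    obtain ⟨hx, rfl⟩ := restrict_eq_some.1 h
    exact ⟨hs hx, hg hx⟩
  sub_le hx hy := by
    obtain ⟨-, rfl⟩ := restrict_eq_some.1 hx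
    obtain ⟨-, rfl⟩ := restrict_eq_some.1 hy
    exact hlip _ _

lemma image_range_of_map_eq {β f : ℕ → Option ℕ} {g : ℕ → ℕ} (h : ∀ x, (β x).map g = f x) :
    g '' range β = range f := by
  ext v
  simp only [Set.mem_image, range, Set.mem_ofPred_eq]
  constructor
  · rintro ⟨u, ⟨x, hx⟩, rfl⟩
    exact ⟨x, by rw [← h, hx, Option.map_some]⟩
  · rintro ⟨x, hx⟩
    obtain ⟨u, hu, rfl⟩ := Option.map_eq_some_iff.1 ((h x).trans hx)
    exact ⟨u, ⟨x, hu⟩, rfl⟩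

lemma bind_restrict_of_range_subset {β f : ℕ → Option ℕ} {g : ℕ → ℕ} {s : Set ℕ}
    (h : ∀ x, (β x).map g = f x) (hs : range β ⊆ s) (x : ℕ) : (β x).bind (restrict g s) = f x := by
  rw [← h]
  cases hx : β x with
  | none => rfl
  | some u => simp [restrict, hs ⟨x, hx⟩]

def collapse (c x : ℕ) : ℕ := if x < c then x else x - 1

def expand (c x : ℕ) : ℕ := if x < c then x else x + 1

lemma collapse_le (c x : ℕ) : collapse c x ≤ x := by
  unfold collapse; split_ifs <;> omega

lemma collapse_sub_collapse_le (c x y : ℕ) : collapse c y - collapse c x ≤ y - x := by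
  unfold collapse; split_ifs <;> omega

lemma collapse_injOn (c : ℕ) : Set.InjOn (collapse c) {c}ᶜ := by
  intro x hx y hy h
  simp only [Set.mem_compl_iff, Set.mem_singleton_iff] at hx hy
  unfold collapse at h; split_ifs at h <;> omega

lemma expand_collapse {c x : ℕ} (h : x ≠ c) : expand c (collapse c x) = x := by
  unfold expand collapse; split_ifs <;> omega

lemma ncard_image_collapse {c : ℕ} {s : Set ℕ} (hs : s.Finite) (hc : c ∈ s) (hc' : c - 1 ∈ s)
    (hc0 : 0 < c) : (collapse c '' s).ncard + 1 = s.ncard := by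
  have himage : collapse c '' (s \ {c}) = collapse c '' s := by
    refine (Set.image_mono Set.sdiff_subset).antisymm ?_
    rintro _ ⟨x, hx, rfl⟩
    by_cases hxc : x = c
    · refine ⟨c - 1, ⟨hc', by simp; omega⟩, ?_⟩
      subst hxc; unfold collapse; split_ifs <;> omega
    · exact ⟨x, ⟨hx, hxc⟩, rfl⟩
  rw [← himage, ((collapse_injOn c).mono fun x hx => hx.2).ncard_image,
    Set.ncard_sdiff_singleton_add_one hc hs]

lemma IsOCP.update (hf : IsOCP n f) {x e : ℕ} (hx : x < n) (he : e < n)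
    (h : ∀ y b, f y = some b → b - e ≤ y - x ∧ e - b ≤ x - y) :
    IsOCP n (Function.update f x (some e)) where
  lt {y b} hy := by
    rw [Function.update_apply] at hy
    split_ifs at hy with hyx
    · cases hy; exact ⟨hyx ▸ hx, he⟩
    · exact hf.lt hy
  sub_le {y y' b b'} hy hy' := by
    rw [Function.update_apply] at hy hy'
    split_ifs at hy hy' with hyx hyx' hyx'
    · cases hy; cases hy'; omega
    · cases hy; have := h _ _ hy'; omega
    · cases hy'; have := h _ _ hy; omega
    · exact hf.sub_le hy hy'

lemma range_update_of_eq_none {x e : ℕ} (hx : f x = none) :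
    range (Function.update f x (some e)) = insert e (range f) := by
  ext v
  simp only [range, Function.update_apply, Set.mem_insert_iff, Set.mem_ofPred_eq]
  constructor
  · rintro ⟨y, hy⟩
    split_ifs at hy with hyx
    · exact Or.inl (Option.some_injective _ hy).symm
    · exact Or.inr ⟨y, hy⟩
  · rintro (rfl | ⟨y, hy⟩)
    · exact ⟨x, if_pos rfl⟩
    · refine ⟨y, ?_⟩
      rwa [if_neg (by rintro rfl; simp [hx] at hy)]

def HasFreshExtension (n : ℕ) (f : ℕ → Option ℕ) : Prop :=
  ∃ x e, f x = none ∧ e ∉ range f ∧ IsOCP n (Function.update f x (some e))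

theorem IsOCP.isProductOfRank_of_hasFreshExtension (hp : p + 2 ≤ n) (hf : IsOCP n f)
    (him : (range f).ncard = p) (hext : HasFreshExtension n f) : IsProductOfRank n (p + 1) f := by
  obtain ⟨x, e, hx, he, hβ⟩ := hext
  have hβrange := range_update_of_eq_none (e := e) hx
  have hen : e < n := (hβ.lt (x := x) (by simp)).2
  obtain ⟨z, hz, hzs⟩ := exists_lt_notMem (s := insert e (range f))
    (Set.insert_subset hen hf.range_subset)
    (by rw [Set.ncard_insert_of_notMem he hf.range_finite]; omega)
  have hze : z ≠ e := fun h => hzs (h ▸ Set.mem_insert _ _)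
  have hzf : z ∉ range f := fun h => hzs (Set.mem_insert_of_mem _ h)
  have hS : insert z (range f) ⊆ Set.Iio n := Set.insert_subset hz hf.range_subset
  refine ⟨Function.update f x (some e), restrict id (insert z (range f)), hβ,
    isOCP_restrict hS (fun _ h => hS h) (fun _ _ => le_rfl), ?_, ?_, fun y => ?_⟩
  · rw [hβrange, Set.ncard_insert_of_notMem he hf.range_finite, him]
  · rw [range_restrict, Set.image_id, Set.ncard_insert_of_notMem hzf hf.range_finite, him]
  · rw [Function.update_apply]
    split_ifs with hyx
    · subst hyx
      simp only [Option.bind_some, restrict, Set.mem_insert_iff, hx]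
      rw [if_neg (by rintro (h | h) <;> [exact hze h.symm; exact he h])]
    · cases hy : f y with
      | none => rfl
      | some v => simp [restrict, show v ∈ range f from ⟨y, hy⟩]

/-- A pair at maximal distance `v - u = y - x` makes `f` rigid between `x` and `y`, so a free
point `c` in between can be sent to `u + (c - x)`. -/
theorem IsOCP.hasFreshExtension_of_tight (hf : IsOCP n f) {c x y u v : ℕ} (hc : c < n)
    (hfc : f c = none) (hxc : x < c) (hcy : c < y) (hx : f x = some u) (hy : f y = some v)
    (htight : v + x = u + y) : HasFreshExtension n f := by
  have hvn := (hf.lt hy).2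
  have key : ∀ w z, f w = some z →
      z - (u + (c - x)) ≤ w - c ∧ u + (c - x) - z ≤ c - w ∧ z ≠ u + (c - x) := by
    intro w z hw
    have hwc : w ≠ c := by rintro rfl; simp [hfc] at hw
    have := hf.sub_le hx hw
    have := hf.sub_le hw hx
    have := hf.sub_le hw hy
    have := hf.sub_le hy hw
    omega
  refine ⟨c, u + (c - x), hfc, fun ⟨w, hw⟩ => (key w _ hw).2.2 rfl,
    hf.update hc (by omega) fun w z hw => ⟨(key w z hw).1, (key w z hw).2.1⟩⟩

theorem IsOCP.eq_of_zero_mem_of_sub_one_mem (hf : IsOCP n f) (h₀ : 0 ∈ range f)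
    (h₁ : n - 1 ∈ range f) {x y : ℕ} (hxy : f x = some y) : y = x := by
  obtain ⟨x₀, hx₀⟩ := h₀
  obtain ⟨x₁, hx₁⟩ := h₁
  have := hf.sub_le hx₀ hx₁
  have := hf.sub_le hx₀ hxy
  have := hf.sub_le hxy hx₁
  have := hf.lt hx₁
  have := hf.lt hxy
  omega

def liftAfter (x₀ : ℕ) (f : ℕ → Option ℕ) : ℕ → Option ℕ :=
  fun x => (f x).map fun v => if x ≤ x₀ then v else v + 1

lemma liftAfter_eq_some {x₀ x v : ℕ} :
    liftAfter x₀ f x = some v ↔ ∃ u, f x = some u ∧ (if x ≤ x₀ then u else u + 1) = v :=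
  Option.map_eq_some_iff

section liftAfter

variable {x₀ x₁ a : ℕ} (hf : IsOCP n f) (h₀ : f x₀ = some a)
include hf h₀

lemma IsOCP.map_collapse_liftAfter (x : ℕ) :
    (liftAfter x₀ f x).map (collapse (a + 1)) = f x := by
  cases hfx : f x with
  | none => simp [liftAfter, hfx]
  | some u =>
    have := hf.le_of_le hfx h₀
    have := hf.le_of_le h₀ hfx
    simp only [liftAfter, hfx, Option.map_some, collapse]
    split_ifs <;> first | rfl | omega

variable (hx : x₀ < x₁) (h₁ : f x₁ = some a) (htop : ∀ v ∈ range f, v + 1 < n)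
include hx h₁ htop

/-- The lift is a contraction because `x₀` and `x₁` have the same value: the step of the lift is
absorbed by the distance from `x₀` to `x₁`. -/
lemma isOCP_liftAfter : IsOCP n (liftAfter x₀ f) := by
  constructor
  · intro x v hv
    obtain ⟨u, hu, rfl⟩ := liftAfter_eq_some.1 hv
    have := hf.lt hu
    have := htop u ⟨x, hu⟩
    split_ifs <;> omega
  · intro x y v v' hv hv'
    obtain ⟨u, hu, rfl⟩ := liftAfter_eq_some.1 hv
    obtain ⟨u', hu', rfl⟩ := liftAfter_eq_some.1 hv'
    have := hf.sub_le hu hu'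
    have := hf.sub_le hu' hu
    have := hf.sub_le hu h₀
    have := hf.sub_le h₀ hu
    have := hf.sub_le h₀ hu'
    have := hf.sub_le hu' h₀
    have := hf.sub_le h₁ hu'
    have := hf.sub_le hu' h₁
    split_ifs <;> omega

lemma IsOCP.ncard_range_liftAfter : (range (liftAfter x₀ f)).ncard = (range f).ncard + 1 := by
  rw [← image_range_of_map_eq (hf.map_collapse_liftAfter h₀)]
  refine (ncard_image_collapse (isOCP_liftAfter hf h₀ hx h₁ htop).range_finite ⟨x₁, ?_⟩ ⟨x₀, ?_⟩
    (by omega)).symm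
  · simp [liftAfter, h₁, show ¬x₁ ≤ x₀ by omega]
  · simp [liftAfter, h₀]

end liftAfter

theorem IsOCP.isProductOfRank_of_not_injective (hp : p + 2 ≤ n) (hf : IsOCP n f)
    (him : (range f).ncard = p) (htop : ∀ v ∈ range f, v + 1 < n) {x₀ x₁ a : ℕ} (hx : x₀ < x₁)
    (h₀ : f x₀ = some a) (h₁ : f x₁ = some a) : IsProductOfRank n (p + 1) f := by
  have hβf := hf.map_collapse_liftAfter h₀
  have hβ := isOCP_liftAfter hf h₀ hx h₁ htop
  obtain ⟨w, hw, hwf⟩ := exists_lt_notMem (s := insert (n - 1) (range f))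
    (Set.insert_subset (by simp; omega) hf.range_subset)
    (by
      rw [Set.ncard_insert_of_notMem (fun h => by have := htop _ h; omega) hf.range_finite]
      omega)
  obtain ⟨z, hz, hzw⟩ : ∃ z < n, collapse (a + 1) z = w := by
    have : w ≠ n - 1 := fun h => hwf (h ▸ Set.mem_insert _ _)
    have : w ≠ a := fun h => hwf (Set.mem_insert_of_mem _ ⟨x₀, h ▸ h₀⟩)
    exact ⟨if w < a then w else w + 1, by split_ifs <;> omega,
      by simp only [collapse]; split_ifs <;> omega⟩
  have hS : insert z (range (liftAfter x₀ f)) ⊆ Set.Iio n := Set.insert_subset hz hβ.range_subset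
  refine ⟨liftAfter x₀ f, restrict (collapse (a + 1)) (insert z (range (liftAfter x₀ f))), hβ,
    isOCP_restrict hS (fun x hx => (collapse_le _ x).trans_lt (hS hx)) (collapse_sub_collapse_le _),
    by rw [hf.ncard_range_liftAfter h₀ hx h₁ htop, him], ?_,
    bind_restrict_of_range_subset hβf (Set.subset_insert _ _)⟩
  rw [range_restrict, Set.image_insert_eq, image_range_of_map_eq hβf, hzw,
    Set.ncard_insert_of_notMem (fun h => hwf (Set.mem_insert_of_mem _ h)) hf.range_finite, him]

def reopen (n c m : ℕ) (f : ℕ → Option ℕ) : ℕ → Option ℕ :=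
  Function.update (fun v => f (expand c v)) (n - 1) (some (m + 1))

lemma reopen_eq_some {c m v b : ℕ} (h : reopen n c m f v = some b) :
    (v = n - 1 ∧ b = m + 1) ∨ (v ≠ n - 1 ∧ f (expand c v) = some b) := by
  by_cases hv : v = n - 1
  · subst hv
    simp only [reopen, Function.update_self, Option.some.injEq] at h
    exact Or.inl ⟨rfl, h.symm⟩
  · simp only [reopen, Function.update_of_ne hv] at h
    exact Or.inr ⟨hv, h⟩

lemma reopen_collapse {c m x : ℕ} (hc : c < n) (hx : x < n) (hxc : x ≠ c) :
    reopen n c m f (collapse c x) = f x := by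
  rw [reopen, Function.update_of_ne (by unfold collapse; split_ifs <;> omega),
    expand_collapse hxc]

section reopen

variable {c t m : ℕ} (hf : IsOCP n f) (hc : c < n) (hfc : f c = none)
include hf hc hfc

lemma range_reopen : range (reopen n c m f) = insert (m + 1) (range f) := by
  refine Set.Subset.antisymm ?_ ?_
  · rintro b ⟨v, hv⟩
    rcases reopen_eq_some hv with ⟨-, rfl⟩ | ⟨-, hv⟩
    exacts [Set.mem_insert _ _, Set.mem_insert_of_mem _ (show b ∈ range f from ⟨_, hv⟩)]
  · rintro b (rfl | ⟨x, hx⟩)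
    · exact ⟨n - 1, Function.update_self _ _ _⟩
    · have hxc : x ≠ c := by rintro rfl; simp [hfc] at hx
      exact ⟨collapse c x, (reopen_collapse hc (hf.lt hx).1 hxc).trans hx⟩

/-- Reopening the gap at `c` stretches distances across `c` by one, which the slack absorbs; the
spare value `m + 1` sits above every value, at the last point. -/
lemma isOCP_reopen
    (hslack : ∀ x y u v, f x = some u → f y = some v → x < c → c < y → v - u < y - x)
    (hm : f t = some m) (hmax : ∀ v ∈ range f, v ≤ m) (hmn : m + 1 < n) :
    IsOCP n (reopen n c m f) := by
  have htc : t ≠ c := by rintro rfl; simp [hfc] at hm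
  have htn := (hf.lt hm).1
  constructor
  · intro v b hv
    rcases reopen_eq_some hv with ⟨rfl, rfl⟩ | ⟨-, hv⟩
    · omega
    · have := hf.lt hv
      unfold expand at this; split_ifs at this <;> omega
  · intro v v' b b' hv hv'
    rcases reopen_eq_some hv with ⟨rfl, rfl⟩ | ⟨hvn, hv⟩ <;>
      rcases reopen_eq_some hv' with ⟨rfl, rfl⟩ | ⟨hvn', hv'⟩
    · omega
    · have := hmax b' ⟨_, hv'⟩
      omega
    · have hvt := hf.sub_le hv hm
      have hvn := (hf.lt hv).1
      by_cases hvc : v < c <;> simp only [expand, hvc, if_true, if_false] at hv hvt hvn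
      · by_cases hct : c < t
        · have := hslack _ _ _ _ hv hm hvc hct
          omega
        · omega
      · omega
    · have hvv' := hf.sub_le hv hv'
      by_cases hvc : v < c <;> by_cases hvc' : v' < c <;>
        simp only [expand, hvc, hvc', if_true, if_false] at hv hv' hvv'
      · exact hvv'
      · have := hslack _ _ _ _ hv hv' hvc (by omega)
        omega
      · omega
      · omega

end reopen

theorem IsOCP.isProductOfRank_of_injective (hf : IsOCP n f) (him : (range f).ncard = p)
    (hinj : ∀ x y v, f x = some v → f y = some v → x = y) {c d : ℕ} (hc : c < n) (hd : d < n)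
    (hdc : d ≠ c) (hfc : f c = none) (hfd : f d = none)
    (hslack : ∀ x y u v, f x = some u → f y = some v → x < c → c < y → v - u < y - x)
    {t m : ℕ} (hm : f t = some m) (hmax : ∀ v ∈ range f, v ≤ m) (hmn : m + 1 < n) :
    IsProductOfRank n (p + 1) f := by
  have hS : insert d (dom f) ⊆ Set.Iio n := Set.insert_subset hd hf.dom_subset
  have hSc : insert d (dom f) ⊆ {c}ᶜ := by
    rintro x (rfl | ⟨v, hv⟩) rfl
    · exact hdc rfl
    · simp [hfc] at hv
  have hdf : d ∉ dom f := fun ⟨v, hv⟩ => by simp [hfd] at hv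
  refine ⟨restrict (collapse c) (insert d (dom f)), reopen n c m f,
    isOCP_restrict hS (fun x hx => (collapse_le c x).trans_lt (hS hx)) (collapse_sub_collapse_le c),
    isOCP_reopen hf hc hfc hslack hm hmax hmn, ?_, ?_, fun x => ?_⟩
  · rw [range_restrict, ((collapse_injOn c).mono hSc).ncard_image,
      Set.ncard_insert_of_notMem hdf hf.dom_finite, ncard_dom_of_injective hinj, him]
  · rw [range_reopen hf hc hfc,
      Set.ncard_insert_of_notMem (fun h => by have := hmax _ h; omega) hf.range_finite, him]
  · by_cases hx : x ∈ insert d (dom f)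
    · simp only [restrict, if_pos hx, Option.bind_some]
      exact reopen_collapse hc (hS hx) (hSc hx)
    · simp only [restrict, if_neg hx, Option.bind_none]
      cases hfx : f x with
      | none => rfl
      | some v => exact absurd (Set.mem_insert_of_mem _ (show x ∈ dom f from ⟨v, hfx⟩)) hx

theorem IsOCP.isProductOfRank_of_forall_add_one_lt (hp₁ : 1 ≤ p) (hp₂ : p + 2 ≤ n)
    (hf : IsOCP n f) (him : (range f).ncard = p) (htop : ∀ v ∈ range f, v + 1 < n) :
    IsProductOfRank n (p + 1) f := by
  by_cases hext : HasFreshExtension n f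
  · exact hf.isProductOfRank_of_hasFreshExtension hp₂ him hext
  by_cases hrep : ∃ x₀ x₁ a, x₀ < x₁ ∧ f x₀ = some a ∧ f x₁ = some a
  · obtain ⟨x₀, x₁, a, hx, h₀, h₁⟩ := hrep
    exact hf.isProductOfRank_of_not_injective hp₂ him htop hx h₀ h₁
  have hinj : ∀ x y v, f x = some v → f y = some v → x = y := by
    intro x y v hx hy
    by_contra hxy
    rcases Nat.lt_or_gt_of_ne hxy with h | h
    exacts [hrep ⟨x, y, v, h, hx, hy⟩, hrep ⟨y, x, v, h, hy, hx⟩]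
  obtain ⟨c, d, ⟨hc, hcf⟩, ⟨hd, hdf⟩, hcd⟩ : ∃ c d, c ∈ Set.Iio n \ dom f ∧
      d ∈ Set.Iio n \ dom f ∧ c ≠ d := by
    refine (Set.one_lt_ncard_iff ((Set.finite_Iio n).subset Set.sdiff_subset)).1 ?_
    rw [Set.ncard_sdiff hf.dom_subset hf.dom_finite, Set.ncard_Iio_nat, ncard_dom_of_injective hinj,
      him]
    omega
  have hnone : ∀ {x}, x ∉ dom f → f x = none := fun {x} hx =>
    Option.eq_none_iff_forall_ne_some.2 fun v hv => hx ⟨v, hv⟩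
  obtain ⟨m, ⟨t, hm⟩, hmax⟩ := Set.exists_max_image (range f) id hf.range_finite
    (Set.nonempty_of_ncard_ne_zero (by omega))
  refine hf.isProductOfRank_of_injective him hinj hc hd hcd.symm (hnone hcf) (hnone hdf) ?_ hm hmax
    (htop m ⟨t, hm⟩)
  intro x y u v hx hy hxc hcy
  have := hf.sub_le hx hy
  by_contra! htight
  exact hext (hf.hasFreshExtension_of_tight hc (hnone hcf) hxc hcy hx hy (by omega))

theorem IsOCP.isProductOfRank (hp₁ : 1 ≤ p) (hp₂ : p + 2 ≤ n) (hf : IsOCP n f)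
    (him : (range f).ncard = p) (h : 0 ∈ range f ∨ n - 1 ∉ range f) :
    IsProductOfRank n (p + 1) f := by
  by_cases hlast : n - 1 ∈ range f
  · have hid {x y : ℕ} : f x = some y → y = x :=
      hf.eq_of_zero_mem_of_sub_one_mem (h.resolve_right (not_not.2 hlast)) hlast
    obtain ⟨z, hz, hzf⟩ := exists_lt_notMem hf.range_subset (by omega)
    refine hf.isProductOfRank_of_hasFreshExtension hp₂ him
      ⟨z, z, ?_, hzf, hf.update hz hz fun y b hy => ?_⟩
    · exact Option.eq_none_iff_forall_ne_some.2 fun v hv => hzf (hid hv ▸ ⟨z, hv⟩)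
    · rw [hid hy]; omega
  · refine hf.isProductOfRank_of_forall_add_one_lt hp₁ hp₂ him fun v hv => ?_
    have := Set.mem_Iio.1 (hf.range_subset hv)
    have : v ≠ n - 1 := fun h => hlast (h ▸ hv)
    omega

end NatPT

section

variable {n p r : ℕ}

namespace PT

def IsORCP (f : PT n) : Prop := IsContraction f ∧ (IsOP f ∨ IsOR f)

def IsProductOfRank (r : ℕ) (f : PT n) : Prop :=
  ∃ β γ : PT n, IsORCP β ∧ IsORCP γ ∧ (im β).ncard = r ∧ (im γ).ncard = r ∧ f = β * γ

def toNat (f : PT n) : ℕ → Option ℕ :=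
  fun x => if h : x < n then (f ⟨x, h⟩).map Fin.val else none

def ofNat (n : ℕ) (g : ℕ → Option ℕ) : PT n :=
  fun x => (g x).bind fun v => if h : v < n then some ⟨v, h⟩ else none

lemma toNat_val (f : PT n) (x : Fin n) : toNat f x = (f x).map Fin.val := by
  simp [toNat]

lemma toNat_eq_some {f : PT n} {x v : ℕ} :
    toNat f x = some v ↔ ∃ y b : Fin n, (y : ℕ) = x ∧ (b : ℕ) = v ∧ f y = some b := by
  constructor
  · intro h
    by_cases hx : x < n
    · obtain ⟨b, hb, rfl⟩ := Option.map_eq_some_iff.1 (by simpa [toNat, hx] using h)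
      exact ⟨⟨x, hx⟩, b, rfl, rfl, hb⟩
    · simp [toNat, hx] at h
  · rintro ⟨y, b, rfl, rfl, h⟩
    rw [toNat_val, h, Option.map_some]

lemma ofNat_eq_some {g : ℕ → Option ℕ} {x b : Fin n} : ofNat n g x = some b ↔ g x = some b := by
  simp only [ofNat, Option.bind_eq_some_iff]
  constructor
  · rintro ⟨v, hv, h⟩
    split_ifs at h with hvn
    cases h
    exact hv
  · intro h
    exact ⟨b, h, by simp⟩

lemma range_toNat (f : PT n) : NatPT.range (toNat f) = Fin.val '' im f := by
  ext v
  simp only [NatPT.range, toNat_eq_some, im, Set.mem_image, Set.mem_ofPred_eq]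
  constructor
  · rintro ⟨_, y, b, rfl, rfl, h⟩
    exact ⟨b, ⟨y, h⟩, rfl⟩
  · rintro ⟨b, ⟨y, h⟩, rfl⟩
    exact ⟨y, y, b, rfl, rfl, h⟩

lemma range_eq_image_im_ofNat {g : ℕ → Option ℕ} (hg : NatPT.IsOCP n g) :
    NatPT.range g = Fin.val '' im (ofNat n g) := by
  ext v
  constructor
  · rintro ⟨x, hx⟩
    obtain ⟨hxn, hvn⟩ := hg.lt hx
    exact ⟨⟨v, hvn⟩, ⟨⟨x, hxn⟩, ofNat_eq_some.2 hx⟩, rfl⟩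
  · rintro ⟨b, ⟨y, hy⟩, rfl⟩
    exact ⟨y, ofNat_eq_some.1 hy⟩

lemma isOCP_toNat {f : PT n} (hc : IsContraction f) (ho : IsOP f) : NatPT.IsOCP n (toNat f) where
  lt h := by
    obtain ⟨y, b, rfl, rfl, -⟩ := toNat_eq_some.1 h
    exact ⟨y.2, b.2⟩
  sub_le hx hy := by
    obtain ⟨x, a, rfl, rfl, hxa⟩ := toNat_eq_some.1 hx
    obtain ⟨y, b, rfl, rfl, hyb⟩ := toNat_eq_some.1 hy
    have hdist := hc x y a b hxa hyb
    unfold Nat.dist at hdist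
    rcases le_total x y with hxy | hyx
    · have := Fin.le_def.1 (ho x y a b hxa hyb hxy)
      omega
    · have := Fin.le_def.1 (ho y x b a hyb hxa hyx)
      omega

lemma isORCP_ofNat {g : ℕ → Option ℕ} (hg : NatPT.IsOCP n g) : IsORCP (ofNat n g) := by
  refine ⟨fun x y a b hx hy => ?_, Or.inl fun x y a b hx hy hxy => ?_⟩
  · have := hg.sub_le (ofNat_eq_some.1 hx) (ofNat_eq_some.1 hy)
    have := hg.sub_le (ofNat_eq_some.1 hy) (ofNat_eq_some.1 hx)
    unfold Nat.dist
    omega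
  · have := hg.sub_le (ofNat_eq_some.1 hy) (ofNat_eq_some.1 hx)
    rw [Fin.le_def] at hxy ⊢
    omega

lemma eq_ofNat_mul_ofNat {f : PT n} {β γ : ℕ → Option ℕ} (hβ : NatPT.IsOCP n β)
    (h : ∀ x, (β x).bind γ = toNat f x) : f = ofNat n β * ofNat n γ := by
  funext x
  refine Option.ext fun b => ?_
  change f x = some b ↔ (ofNat n β x).bind (ofNat n γ) = some b
  have hfx : f x = some b ↔ (β x).bind γ = some (b : ℕ) := by
    rw [h, toNat_val, Option.map_eq_some_iff]
    exact ⟨fun hb => ⟨b, hb, rfl⟩, fun ⟨a, ha, hab⟩ => Fin.ext hab ▸ ha⟩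
  simp only [hfx, Option.bind_eq_some_iff, ofNat_eq_some]
  constructor
  · rintro ⟨v, hv, hγ⟩
    exact ⟨⟨v, (hβ.lt hv).2⟩, hv, hγ⟩
  · rintro ⟨a, ha, hγ⟩
    exact ⟨a, ha, hγ⟩

lemma isProductOfRank_of_toNat {f : PT n} (h : NatPT.IsProductOfRank n r (toNat f)) :
    IsProductOfRank r f := by
  obtain ⟨β, γ, hβ, hγ, hβcard, hγcard, hcomp⟩ := h
  refine ⟨ofNat n β, ofNat n γ, isORCP_ofNat hβ, isORCP_ofNat hγ, ?_, ?_,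
    eq_ofNat_mul_ofNat hβ hcomp⟩
  · rwa [← Set.ncard_image_of_injective _ Fin.val_injective, ← range_eq_image_im_ofNat hβ]
  · rwa [← Set.ncard_image_of_injective _ Fin.val_injective, ← range_eq_image_im_ofNat hγ]

lemma isProductOfRank_of_isOP {f : PT n} (hp₁ : 1 ≤ p) (hp₂ : p + 2 ≤ n) (hc : IsContraction f)
    (ho : IsOP f) (him : (im f).ncard = p) (h : 0 ∈ Fin.val '' im f ∨ n - 1 ∉ Fin.val '' im f) :
    IsProductOfRank (p + 1) f := by
  refine isProductOfRank_of_toNat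
    ((isOCP_toNat hc ho).isProductOfRank hp₁ hp₂ ?_ (by rwa [range_toNat]))
  rwa [range_toNat, Set.ncard_image_of_injective _ Fin.val_injective]

def rev (n : ℕ) : PT n := fun x => some x.rev

lemma rev_mul_apply (f : PT n) (x : Fin n) : (rev n * f) x = f x.rev := rfl

lemma mul_rev_apply (f : PT n) (x : Fin n) : (f * rev n) x = (f x).map Fin.rev := by
  change (f x).bind _ = _
  cases f x <;> rfl

lemma rev_mul_rev_mul (f : PT n) : rev n * (rev n * f) = f :=
  funext fun x => by rw [rev_mul_apply, rev_mul_apply, Fin.rev_rev]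

lemma mul_rev_mul_rev (f : PT n) : f * rev n * rev n = f :=
  funext fun x => by simp [mul_rev_apply, Option.map_map, Fin.rev_involutive.comp_self]

lemma mul_rev_eq_some {f : PT n} {x b : Fin n} : (f * rev n) x = some b ↔ f x = some b.rev := by
  rw [mul_rev_apply, Option.map_eq_some_iff]
  constructor
  · rintro ⟨a, ha, rfl⟩
    rwa [Fin.rev_rev]
  · exact fun h => ⟨b.rev, h, Fin.rev_rev b⟩

lemma im_rev_mul (f : PT n) : im (rev n * f) = im f :=
  Set.ext fun _ => ⟨fun ⟨x, hx⟩ => ⟨x.rev, hx⟩,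
    fun ⟨x, hx⟩ => ⟨x.rev, by rwa [rev_mul_apply, Fin.rev_rev]⟩⟩

lemma im_mul_rev (f : PT n) : im (f * rev n) = Fin.rev '' im f := by
  ext b
  rw [← Fin.rev_rev b, Fin.rev_injective.mem_set_image]
  exact exists_congr fun x => by rw [mul_rev_eq_some, Fin.rev_rev]

lemma dist_rev (a b : Fin n) : Nat.dist a.rev b.rev = Nat.dist a b := by
  simp only [Nat.dist, Fin.val_rev]
  omega

end PT

lemma IsContraction.rev_mul {f : PT n} (hf : IsContraction f) : IsContraction (PT.rev n * f) :=
  fun x y a b hx hy => (hf _ _ a b hx hy).trans (PT.dist_rev x y).le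

lemma IsContraction.mul_rev {f : PT n} (hf : IsContraction f) : IsContraction (f * PT.rev n) :=
  fun x y a b hx hy => by
    rw [← PT.dist_rev a b]
    exact hf x y _ _ (PT.mul_rev_eq_some.1 hx) (PT.mul_rev_eq_some.1 hy)

lemma IsOP.rev_mul {f : PT n} (hf : IsOP f) : IsOR (PT.rev n * f) :=
  fun _ _ a b hx hy hxy => hf _ _ b a hy hx (Fin.rev_le_rev.2 hxy)

lemma IsOR.rev_mul {f : PT n} (hf : IsOR f) : IsOP (PT.rev n * f) :=
  fun _ _ a b hx hy hxy => hf _ _ b a hy hx (Fin.rev_le_rev.2 hxy)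

lemma IsOP.mul_rev {f : PT n} (hf : IsOP f) : IsOR (f * PT.rev n) :=
  fun x y _ _ hx hy hxy =>
    Fin.rev_le_rev.1 (hf x y _ _ (PT.mul_rev_eq_some.1 hx) (PT.mul_rev_eq_some.1 hy) hxy)

lemma IsOR.mul_rev {f : PT n} (hf : IsOR f) : IsOP (f * PT.rev n) :=
  fun x y _ _ hx hy hxy =>
    Fin.rev_le_rev.1 (hf x y _ _ (PT.mul_rev_eq_some.1 hx) (PT.mul_rev_eq_some.1 hy) hxy)

namespace PT

lemma IsORCP.rev_mul {f : PT n} (hf : IsORCP f) : IsORCP (rev n * f) :=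
  ⟨hf.1.rev_mul, hf.2.symm.imp IsOR.rev_mul IsOP.rev_mul⟩

lemma IsORCP.mul_rev {f : PT n} (hf : IsORCP f) : IsORCP (f * rev n) :=
  ⟨hf.1.mul_rev, hf.2.symm.imp IsOR.mul_rev IsOP.mul_rev⟩

lemma IsProductOfRank.of_rev_mul {f : PT n} (h : IsProductOfRank r (rev n * f)) :
    IsProductOfRank r f := by
  obtain ⟨β, γ, hβ, hγ, hβcard, hγcard, hf⟩ := h
  refine ⟨rev n * β, γ, hβ.rev_mul, hγ, by rwa [im_rev_mul], hγcard, ?_⟩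
  rw [mul_assoc, ← hf, rev_mul_rev_mul]

lemma IsProductOfRank.of_mul_rev {f : PT n} (h : IsProductOfRank r (f * rev n)) :
    IsProductOfRank r f := by
  obtain ⟨β, γ, hβ, hγ, hβcard, hγcard, hf⟩ := h
  refine ⟨β, γ * rev n, hβ, hγ.mul_rev, hβcard, ?_, ?_⟩
  · rwa [im_mul_rev, Set.ncard_image_of_injective _ Fin.rev_injective]
  · rw [← mul_assoc, ← hf, mul_rev_mul_rev]

end PT

end

theorem stmt_15_general {n p : ℕ} (hp1 : 1 ≤ p) (hp2 : p ≤ n - 2)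
    (f : PT n) (hf : IsContraction f ∧ (IsOP f ∨ IsOR f)) (him : (im f).ncard = p) :
    ∃ β γ : PT n,
      (IsContraction β ∧ (IsOP β ∨ IsOR β)) ∧ (IsContraction γ ∧ (IsOP γ ∨ IsOR γ)) ∧
      (im β).ncard = p + 1 ∧ (im γ).ncard = p + 1 ∧ f = β * γ := by
  have hp : p + 2 ≤ n := by omega
  suffices hOP : ∀ g : PT n, IsContraction g → IsOP g → (im g).ncard = p →
      PT.IsProductOfRank (p + 1) g by
    obtain ⟨hc, hop | hor⟩ := hf
    · exact hOP f hc hop him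
    · exact PT.IsProductOfRank.of_rev_mul (hOP _ hc.rev_mul hor.rev_mul (by rwa [PT.im_rev_mul]))
  intro g hc hop him
  by_cases h : 0 ∈ Fin.val '' im g ∨ n - 1 ∉ Fin.val '' im g
  · exact PT.isProductOfRank_of_isOP hp1 hp hc hop him h
  -- `0 ∉ im g`, so the conjugate of `g` by the reversal misses the value `n - 1`
  refine (PT.isProductOfRank_of_isOP hp1 hp hc.rev_mul.mul_rev hop.rev_mul.mul_rev ?_
    (Or.inr ?_)).of_mul_rev.of_rev_mul
  · rw [PT.im_mul_rev, Set.ncard_image_of_injective _ Fin.rev_injective, PT.im_rev_mul, him]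
  · rw [PT.im_mul_rev, PT.im_rev_mul]
    rintro ⟨_, ⟨y, hy, rfl⟩, hrev⟩
    rw [Fin.val_rev] at hrev
    exact h (Or.inl ⟨y, hy, by omega⟩)

/-- for `n ≥ 3` and `1 ≤ p ≤ n-2`, every `α ∈ ORCP_n` with `|im α| = p`
factors as a product of two elements of `ORCP_n` of image size `p+1`. -/
theorem stmt_15 {n p : ℕ} (hn : 3 ≤ n) (hp1 : 1 ≤ p) (hp2 : p ≤ n - 2)
    (f : PT n) (hf : IsContraction f ∧ (IsOP f ∨ IsOR f)) (him : (im f).ncard = p) :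
    ∃ β γ : PT n,
      (IsContraction β ∧ (IsOP β ∨ IsOR β)) ∧ (IsContraction γ ∧ (IsOP γ ∨ IsOR γ)) ∧
      (im β).ncard = p + 1 ∧ (im γ).ncard = p + 1 ∧ f = β * γ :=
  stmt_15_general hp1 hp2 f hf him
end
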